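/- arXiv:0908.3540 — 6 statements merged into one kernel-verified Lean document; each statement's English description precedes it below -/
import Mathlib

section
/- If w = w_1 w_2 ⋯ w_n is a contre-lattice word and we transpose an adjacent pair w_i w_{i+1} with w_i < w_{i+1}, then the resulting word is still contre-lattice. -/
open scoped Classical

/-! ## Words -/

def maxLetter (w : List ℕ) : ℕ := w.foldr max 0

def ContreUpTo (r : ℕ) (w : List ℕ) : Prop :=
  ∀ i j : ℕ, 1 < j → j ≤ r → (w.take i).count (j - 1) ≤ (w.take i).count j

def IsContreLattice (w : List ℕ) : Prop := ContreUpTo (maxLetter w) w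

def IsRegularContreLattice (w : List ℕ) : Prop :=
  IsContreLattice w ∧ (∀ x ∈ w, 1 ≤ x) ∧ 1 ∈ w

def IsLatticeWord (w : List ℕ) : Prop :=
  ∀ i j : ℕ, 1 ≤ j → (w.take i).count (j + 1) ≤ (w.take i).count j

/-! ## Skyline fillings -/

structure SkylineFilling (n : ℕ) where
  shape : Fin n → ℕ
  inner : Fin n → ℕ
  basement : Fin n → ℕ
  entry : Fin n → ℕ → ℕ

namespace SkylineFilling

variable {n : ℕ}

def Inversion (a b c : ℕ) : Prop := (b < a ∧ a ≤ c) ∨ (a ≤ c ∧ c < b)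

def IsSSK (F : SkylineFilling n) : Prop :=
  (∀ i, F.inner i ≤ F.shape i) ∧
  (∀ i : Fin n, ∀ k : ℕ, k ≤ F.inner i → F.entry i k = F.basement i) ∧
  (∀ i : Fin n, F.entry i 0 = F.basement i) ∧
  (∀ i : Fin n, ∀ k : ℕ, k + 1 ≤ F.shape i → F.entry i (k + 1) ≤ F.entry i k) ∧
  (∀ i j : Fin n, ∀ k : ℕ, i < j → F.shape j ≤ F.shape i → 1 ≤ k → k ≤ F.shape j →
      Inversion (F.entry i k) (F.entry j k) (F.entry i (k - 1))) ∧
  (∀ i j : Fin n, ∀ k : ℕ, i < j → F.shape i < F.shape j → k ≤ F.shape i → k + 1 ≤ F.shape j →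
      Inversion (F.entry j (k + 1)) (F.entry i k) (F.entry j k))

def EntriesIn (F : SkylineFilling n) (m : ℕ) : Prop :=
  ∀ i : Fin n, ∀ k : ℕ, F.inner i < k → k ≤ F.shape i →
    1 ≤ F.entry i k ∧ F.entry i k ≤ m

def Normalized (F : SkylineFilling n) : Prop :=
  ∀ i : Fin n, ∀ k : ℕ, F.shape i < k → F.entry i k = 0

def colList (F : SkylineFilling n) (k : ℕ) : List ℕ :=
  (List.finRange n).filterMap fun i =>
    if F.inner i < k ∧ k ≤ F.shape i then some (F.entry i k) else none

def width (F : SkylineFilling n) : ℕ := Finset.univ.sup F.shape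

def colWord (F : SkylineFilling n) : List ℕ :=
  ((List.range F.width).reverse.map fun k => F.colList (k + 1)).flatten

def looseWord (F : SkylineFilling n) : List ℕ :=
  ((List.range F.width).reverse.map fun k =>
    List.insertionSort (· ≥ ·) (F.colList (k + 1))).flatten

def colSet (F : SkylineFilling n) (k : ℕ) : Finset ℕ := (F.colList k).toFinset

def rowWord (F : SkylineFilling n) : List ℕ :=
  ((List.finRange n).reverse.map fun i =>
    (List.range (F.shape i - F.inner i)).map fun t => F.entry i (F.inner i + 1 + t)).flatten

def count (F : SkylineFilling n) (v : ℕ) : ℕ := F.rowWord.count v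

/-- The content of `F` is `lam*`, the reverse of the partition `lam` (which has `r` parts). -/
def ContentRev (F : SkylineFilling n) (lam : ℕ → ℕ) (r : ℕ) : Prop :=
  ∀ v : ℕ, F.count v = if 1 ≤ v ∧ v ≤ r then lam (r - v) else 0

end SkylineFilling

/-! ## Fillings of Ferrers shapes (CT and SSYT) -/

structure Filling (n : ℕ) where
  shape : Fin n → ℕ
  entry : Fin n → ℕ → ℕ

namespace Filling

variable {n : ℕ}

def IsCT (F : Filling n) (m : ℕ) : Prop :=
  (∀ i j : Fin n, i ≤ j → F.shape j ≤ F.shape i) ∧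
  (∀ i : Fin n, ∀ k : ℕ, 1 ≤ k → k + 1 ≤ F.shape i → F.entry i (k + 1) ≤ F.entry i k) ∧
  (∀ i j : Fin n, ∀ k : ℕ, i < j → 1 ≤ k → k ≤ F.shape j → F.entry j k < F.entry i k) ∧
  (∀ i : Fin n, ∀ k : ℕ, 1 ≤ k → k ≤ F.shape i → 1 ≤ F.entry i k ∧ F.entry i k ≤ m) ∧
  (∀ i : Fin n, ∀ k : ℕ, k = 0 ∨ F.shape i < k → F.entry i k = 0)

def IsSSYT (F : Filling n) (m : ℕ) : Prop :=
  (∀ i j : Fin n, i ≤ j → F.shape j ≤ F.shape i) ∧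
  (∀ i : Fin n, ∀ k : ℕ, 1 ≤ k → k + 1 ≤ F.shape i → F.entry i k ≤ F.entry i (k + 1)) ∧
  (∀ i j : Fin n, ∀ k : ℕ, i < j → 1 ≤ k → k ≤ F.shape j → F.entry i k < F.entry j k) ∧
  (∀ i : Fin n, ∀ k : ℕ, 1 ≤ k → k ≤ F.shape i → 1 ≤ F.entry i k ∧ F.entry i k ≤ m) ∧
  (∀ i : Fin n, ∀ k : ℕ, k = 0 ∨ F.shape i < k → F.entry i k = 0)

def word (F : Filling n) : List ℕ :=
  ((List.finRange n).map fun i =>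
    (List.range (F.shape i)).map fun t => F.entry i (t + 1)).flatten

def count (F : Filling n) (v : ℕ) : ℕ := F.word.count v

def colList (F : Filling n) (k : ℕ) : List ℕ :=
  (List.finRange n).filterMap fun i =>
    if 1 ≤ k ∧ k ≤ F.shape i then some (F.entry i k) else none

def ContentRev (F : Filling n) (lam : ℕ → ℕ) (r : ℕ) : Prop :=
  ∀ v : ℕ, F.count v = if 1 ≤ v ∧ v ≤ r then lam (r - v) else 0

end Filling

/-! ## Generating polynomials -/

noncomputable def schurPoly (n : ℕ) (lam : ℕ → ℕ) : MvPolynomial (Fin n) ℤ :=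
  ∑ μ ∈ Finset.Nat.antidiagonalTuple n (∑ i ∈ Finset.range n, lam i),
    (Nat.card {T : Filling n // T.shape = (fun i => lam i.val) ∧ T.IsSSYT n ∧
        ∀ v : Fin n, T.count (v.val + 1) = μ v}) •
      MvPolynomial.monomial (Finsupp.equivFunOnFinite.symm μ) (1 : ℤ)

noncomputable def atomPoly (n : ℕ) (γ : Fin n → ℕ) : MvPolynomial (Fin n) ℤ :=
  ∑ μ ∈ Finset.Nat.antidiagonalTuple n (∑ i, γ i),
    (Nat.card {F : SkylineFilling n // F.shape = γ ∧ F.inner = (fun _ => 0) ∧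
        F.basement = (fun i : Fin n => (i : ℕ) + 1) ∧ F.IsSSK ∧ F.EntriesIn n ∧ F.Normalized ∧
        ∀ v : Fin n, F.count (v.val + 1) = μ v}) •
      MvPolynomial.monomial (Finsupp.equivFunOnFinite.symm μ) (1 : ℤ)

noncomputable def qsPoly (n : ℕ) (α : List ℕ) : MvPolynomial (Fin n) ℤ :=
  ∑ γ ∈ (Finset.Nat.antidiagonalTuple n α.sum).filter
      (fun γ => (List.ofFn γ).filter (· != 0) = α),
    atomPoly n γ

noncomputable def charPoly (n : ℕ) (γ : Fin n → ℕ) : MvPolynomial (Fin n) ℤ :=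
  ∑ μ ∈ Finset.Nat.antidiagonalTuple n (∑ i, γ i),
    (Nat.card {F : SkylineFilling n // F.shape = (fun i => γ i.rev) ∧ F.inner = (fun _ => 0) ∧
        F.basement = (fun i : Fin n => n - (i : ℕ)) ∧ F.IsSSK ∧ F.EntriesIn n ∧ F.Normalized ∧
        ∀ v : Fin n, F.count (v.val + 1) = μ v}) •
      MvPolynomial.monomial (Finsupp.equivFunOnFinite.symm μ) (1 : ℤ)

noncomputable def lrsCount (n : ℕ) (γ δ : Fin n → ℕ) (lam : ℕ → ℕ) (r : ℕ) : ℕ :=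
  Nat.card {F : SkylineFilling n // F.shape = δ ∧ F.inner = γ ∧
    F.basement = (fun i : Fin n => 2 * n - (i : ℕ)) ∧ F.IsSSK ∧ F.EntriesIn n ∧ F.Normalized ∧
    IsRegularContreLattice F.colWord ∧ F.ContentRev lam r}

noncomputable def lrkCount (n : ℕ) (γ δ : Fin n → ℕ) (lam : ℕ → ℕ) (r : ℕ) : ℕ :=
  Nat.card {F : SkylineFilling n // F.shape = (fun i => δ i.rev) ∧
    F.inner = (fun i => γ i.rev) ∧
    F.basement = (fun i : Fin n => n + 1 + (i : ℕ)) ∧ F.IsSSK ∧ F.EntriesIn n ∧ F.Normalized ∧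
    IsRegularContreLattice F.colWord ∧ F.ContentRev lam r}

noncomputable def lrcCount (n : ℕ) (αl βl : List ℕ) (lam : ℕ → ℕ) (r : ℕ) : ℕ :=
  Nat.card (Quot (fun (L₁ L₂ : {F : SkylineFilling n //
      F.basement = (fun i : Fin n => 2 * n - (i : ℕ)) ∧ F.IsSSK ∧ F.EntriesIn n ∧ F.Normalized ∧
      IsRegularContreLattice F.colWord ∧ F.ContentRev lam r ∧
      (List.ofFn F.shape).filter (· != 0) = βl ∧
      (List.ofFn F.inner).filter (· != 0) = αl}) =>
    ∀ k : ℕ, L₁.1.colSet k = L₂.1.colSet k))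

def IsRemComp (a b : List ℕ) (k : ℕ) : Prop :=
  ∃ u v : List ℕ, b = u ++ k :: v ∧ k ∉ v ∧
    a = u ++ (if k = 1 then v else (k - 1) :: v)

/-! Every prefix of `u ++ b :: a :: v` other than `u ++ [b]` is a rearrangement of a prefix of
`u ++ a :: b :: v`. In `u ++ [b]` only `b = j - 1` can break the inequality for `j`; then `a ≠ j`,
and the prefix `u ++ [a, b]` already shows `u.count (j - 1) < u.count j`. -/

lemma maxLetter_perm {w w' : List ℕ} (h : w.Perm w') : maxLetter w = maxLetter w' :=
  h.foldr_eq 0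

lemma take_perm_take_append_swap (u v : List ℕ) (a b : ℕ) {i : ℕ} (hi : i ≠ u.length + 1) :
    ((u ++ b :: a :: v).take i).Perm ((u ++ a :: b :: v).take i) := by
  rcases le_or_gt i u.length with hle | hlt
  · rw [List.take_append_of_le_length hle, List.take_append_of_le_length hle]
  · obtain ⟨k, rfl⟩ : ∃ k, i = u.length + (k + 2) := ⟨i - (u.length + 2), by omega⟩
    rw [List.take_append, List.take_append, Nat.add_sub_cancel_left,
      List.take_of_length_le (by omega)]
    exact (List.Perm.swap a b (v.take k)).append_left u

lemma take_append_cons_cons_length_succ (u v : List ℕ) (a b : ℕ) :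
    (u ++ b :: a :: v).take (u.length + 1) = u ++ [b] := by
  simp [List.take_append]

lemma take_append_cons_cons_length_add_two (u v : List ℕ) (a b : ℕ) :
    (u ++ a :: b :: v).take (u.length + 2) = u ++ [a, b] := by
  simp [List.take_append]

lemma count_le_count_append_singleton {u : List ℕ} {a b x y : ℕ} (hxy : x < y) (hab : a < b)
    (hu : u.count x ≤ u.count y) (huab : (u ++ [a, b]).count x ≤ (u ++ [a, b]).count y) :
    (u ++ [b]).count x ≤ (u ++ [b]).count y := by
  simp only [List.count_append, List.count_cons, List.count_nil, beq_iff_eq] at huab ⊢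
  split_ifs at huab ⊢ <;> omega

theorem stmt0 (u v : List ℕ) (a b : ℕ) (hab : a < b)
    (h : IsContreLattice (u ++ a :: b :: v)) :
    IsContreLattice (u ++ b :: a :: v) := by
  intro i j hj hjr
  rw [maxLetter_perm ((List.Perm.swap a b v).append_left u)] at hjr
  by_cases hi : i = u.length + 1
  · subst hi
    rw [take_append_cons_cons_length_succ]
    have hu := h u.length j hj hjr
    have huab := h (u.length + 2) j hj hjr
    rw [List.take_left] at hu
    rw [take_append_cons_cons_length_add_two] at huab
    exact count_le_count_append_singleton (by omega) hab hu huab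
  · simpa only [(take_perm_take_append_swap u v a b hi).count_eq] using h i j hj hjr
end

section
/- Removing the first occurrence (in left-to-right order) of the smallest-valued letter from a contre-lattice word yields another contre-lattice word. -/
open scoped Classical

/-!
Deleting a copy of the minimal letter `m` lowers only the count of `m`, which occurs in the
contre-lattice inequalities only on the small side (for `j = m + 1`); the inequalities for
`j ≤ m` hold trivially because no letter below `m` occurs. Deleting a letter also cannot raise
the maximal letter, so fewer inequalities have to be checked.
-/

theorem maxLetter_le_iff {w : List ℕ} {b : ℕ} : maxLetter w ≤ b ↔ ∀ x ∈ w, x ≤ b := by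
  induction w with
  | nil => simp [maxLetter]
  | cons x w ih => simp [maxLetter, ← ih]

theorem maxLetter_mono {w₁ w₂ : List ℕ} (h : w₁ ⊆ w₂) : maxLetter w₁ ≤ maxLetter w₂ :=
  maxLetter_le_iff.2 fun x hx => maxLetter_le_iff.1 le_rfl x (h hx)

theorem ContreUpTo.mono {r s : ℕ} {w : List ℕ} (h : ContreUpTo r w) (hsr : s ≤ r) :
    ContreUpTo s w :=
  fun i j hj hjs => h i j hj (hjs.trans hsr)

theorem exists_take_append_cons (u v : List ℕ) (m i : ℕ) :
    ∃ i', ((u ++ v).take i).Sublist ((u ++ m :: v).take i') ∧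
      ∀ x ≠ m, ((u ++ m :: v).take i').count x = ((u ++ v).take i).count x := by
  rcases le_or_gt i u.length with hi | hi
  · have htake : (u ++ m :: v).take i = (u ++ v).take i := by
      simp [List.take_append, Nat.sub_eq_zero_of_le hi]
    exact ⟨i, htake ▸ List.Sublist.refl _, fun x _ => by rw [htake]⟩
  · have htake : (u ++ m :: v).take (i + 1) = u ++ m :: v.take (i - u.length) := by
      rw [List.take_append, List.take_of_length_le (by omega),
        show i + 1 - u.length = i - u.length + 1 by omega, List.take_succ_cons]
    have htake' : (u ++ v).take i = u ++ v.take (i - u.length) := by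
      rw [List.take_append, List.take_of_length_le hi.le]
    refine ⟨i + 1, ?_, fun x hx => ?_⟩
    · rw [htake, htake']
      exact (List.sublist_cons_self m _).append_left u
    · rw [htake, htake', List.count_append, List.count_append,
        List.count_cons_of_ne (Ne.symm hx)]

theorem ContreUpTo.append_of_append_cons {r m : ℕ} {u v : List ℕ}
    (h : ContreUpTo r (u ++ m :: v)) (hmin : ∀ x ∈ u ++ v, m ≤ x) :
    ContreUpTo r (u ++ v) := by
  intro i j hj hjr
  rcases le_or_gt j m with hjm | hjm
  · -- no letter of `u ++ v` is smaller than `m`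
    rw [List.count_eq_zero.2 fun hmem => by
      have := hmin _ (List.mem_of_mem_take hmem); omega]
    exact Nat.zero_le _
  · obtain ⟨i', hsub, hcount⟩ := exists_take_append_cons u v m i
    calc ((u ++ v).take i).count (j - 1)
        ≤ ((u ++ m :: v).take i').count (j - 1) := hsub.count_le _
      _ ≤ ((u ++ m :: v).take i').count j := h i' j hj hjr
      _ = ((u ++ v).take i).count j := hcount j hjm.ne'

theorem stmt1_general (u v : List ℕ) (m : ℕ)
    (hmin : ∀ x ∈ u ++ m :: v, m ≤ x)
    (h : IsContreLattice (u ++ m :: v)) :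
    IsContreLattice (u ++ v) := by
  have hsub : (u ++ v).Sublist (u ++ m :: v) := (List.sublist_cons_self m v).append_left u
  exact (h.mono (maxLetter_mono hsub.subset)).append_of_append_cons
    fun x hx => hmin x (hsub.subset hx)

theorem stmt1 (u v : List ℕ) (m : ℕ)
    (hmin : ∀ x ∈ u ++ m :: v, m ≤ x) (hfirst : m ∉ u)
    (h : IsContreLattice (u ++ m :: v)) :
    IsContreLattice (u ++ v) :=
  stmt1_general u v m hmin h
end

section
/- Let Y be a semistandard skyline filling with entries in [n] on a basement all of whose entries exceed n. Then Y is contre-lattice if and only if Y is loosely contre-lattice, i.e., the word obtained by concatenating the column sets of Y (each column sorted into decreasing order, columns read right to left) is contre-lattice. -/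
open scoped Classical

namespace SkylineAux

open List

/-! ### Generic list lemmas -/

theorem take_flatten_decomp :
    ∀ (G : List (List ℕ)) (i : ℕ), ∃ t s,
      G.flatten.take i = (G.take t).flatten ++ ((G.drop t).headI.take s) := by
  intro G
  induction G with
  | nil => intro i; exact ⟨0, 0, by simp⟩
  | cons c G ih =>
    intro i
    by_cases h : i ≤ c.length
    · refine ⟨0, i, ?_⟩
      simp [List.take_append, Nat.sub_eq_zero_of_le h]
    · obtain ⟨t, s, hts⟩ := ih (i - c.length)
      refine ⟨t + 1, s, ?_⟩
      have h1 : (c ++ G.flatten).take i = c ++ G.flatten.take (i - c.length) := by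
        rw [List.take_append, List.take_of_length_le (le_of_not_ge h)]
      simp only [List.flatten_cons, h1, hts, List.take_succ_cons, List.drop_succ_cons,
        List.flatten_cons, List.append_assoc]

theorem decomp_prefix (G : List (List ℕ)) (t s : ℕ) :
    ((G.take t).flatten ++ ((G.drop t).headI.take s)) <+: G.flatten := by
  conv_rhs => rw [← List.take_append_drop t G]
  rw [List.flatten_append]
  apply (List.prefix_append_right_inj _).mpr
  cases hG : G.drop t with
  | nil => simp; right; rfl
  | cons c l =>
    simp only [List.headI, List.flatten_cons]
    exact (List.take_prefix s c).trans (List.prefix_append c l.flatten)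

theorem filterMap_split {α β : Type*} (f : α → Option β) :
    ∀ (l : List α) (s : ℕ) (x y : β), x ∈ (l.filterMap f).take s →
      y ∈ (l.filterMap f).drop s →
      ∃ p q l₁ l₂, l = l₁ ++ p :: l₂ ∧ q ∈ l₂ ∧ f p = some x ∧ f q = some y := by
  intro l
  induction l with
  | nil => intro s x y hx hy; simp at hx
  | cons a l ih =>
    intro s x y hx hy
    cases hfa : f a with
    | none =>
      rw [List.filterMap_cons_none hfa] at hx hy
      obtain ⟨p, q, l₁, l₂, rfl, hq, hfp, hfq⟩ := ih s x y hx hy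
      exact ⟨p, q, a :: l₁, l₂, by simp, hq, hfp, hfq⟩
    | some b =>
      rw [List.filterMap_cons_some hfa] at hx hy
      cases s with
      | zero => simp at hx
      | succ s =>
        rw [List.take_succ_cons] at hx
        rw [List.drop_succ_cons] at hy
        rcases List.mem_cons.mp hx with rfl | hx'
        · obtain ⟨q, hql, hfq⟩ := List.mem_filterMap.mp (List.mem_of_mem_drop hy)
          exact ⟨a, q, [], l, rfl, hql, hfa, hfq⟩
        · obtain ⟨p, q, l₁, l₂, rfl, hq, hfp, hfq⟩ := ih s x y hx' hy
          exact ⟨p, q, a :: l₁, l₂, by simp, hq, hfp, hfq⟩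

theorem rel_of_split {α : Type*} {R : α → α → Prop} {l l₁ l₂ : List α} {p q : α}
    (hpw : l.Pairwise R) (hl : l = l₁ ++ p :: l₂) (hq : q ∈ l₂) : R p q := by
  subst hl
  exact List.rel_of_pairwise_cons (List.pairwise_append.mp hpw).2.1 hq

theorem rev_range_drop : ∀ (m t : ℕ),
    (List.range m).reverse.drop t = (List.range (m - t)).reverse := by
  intro m
  induction m with
  | zero => intro t; simp
  | succ m ih =>
    intro t
    cases t with
    | zero => simp
    | succ t =>
      rw [List.range_succ, List.reverse_append]
      simp only [List.reverse_singleton, List.singleton_append, List.drop_succ_cons]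
      rw [ih t, show m + 1 - (t + 1) = m - t from by omega]

def sufF (f : ℕ → List ℕ) : ℕ → List ℕ
  | 0 => []
  | m + 1 => f m ++ sufF f m

theorem flatten_map_rev (f : ℕ → List ℕ) :
    ∀ m, (((List.range m).reverse).map f).flatten = sufF f m := by
  intro m
  induction m with
  | zero => simp [sufF]
  | succ m ih =>
    rw [List.range_succ, List.reverse_append]
    simp only [List.reverse_singleton, List.singleton_append, List.map_cons,
      List.flatten_cons, sufF]
    rw [ih]

theorem drop_flatten_map_rev (f : ℕ → List ℕ) (m t : ℕ) :
    (((((List.range m).reverse).map f).drop t)).flatten = sufF f (m - t) := by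
  rw [← List.map_drop, rev_range_drop, flatten_map_rev]

theorem headI_drop (f : ℕ → List ℕ) (m t : ℕ) (h : t < m) :
    ((((List.range m).reverse).map f).drop t).headI = f (m - t - 1) := by
  rw [← List.map_drop, rev_range_drop]
  obtain ⟨u, hu⟩ : ∃ u, m - t = u + 1 := ⟨m - t - 1, by omega⟩
  rw [hu, List.range_succ, List.reverse_append]
  simp only [List.reverse_singleton, List.singleton_append, List.map_cons, List.headI]
  congr 1

theorem headI_drop_ge (f : ℕ → List ℕ) (m t : ℕ) (h : m ≤ t) :
    ((((List.range m).reverse).map f).drop t).headI = [] := by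
  rw [← List.map_drop, rev_range_drop]
  have : m - t = 0 := by omega
  simp only [this, List.range_zero, List.reverse_nil, List.map_nil]
  rfl

theorem count_take_flatten_add (f : ℕ → List ℕ) (m t v : ℕ) :
    (((((List.range m).reverse).map f).take t).flatten).count v + (sufF f (m - t)).count v
      = (sufF f m).count v := by
  conv_rhs => rw [← flatten_map_rev f m,
    ← List.take_append_drop t (((List.range m).reverse).map f)]
  rw [List.flatten_append, List.count_append, drop_flatten_map_rev]

theorem maxLetter_perm {w1 w2 : List ℕ} (h : w1.Perm w2) :
    w1.foldr max 0 = w2.foldr max 0 := by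
  induction h with
  | nil => rfl
  | cons x h ih => simp [ih]
  | swap x y l =>
    simp only [List.foldr_cons]
    rw [← max_assoc, ← max_assoc, max_comm y x]
  | trans h1 h2 ih1 ih2 => rw [ih1, ih2]

theorem sufF_perm (f g : ℕ → List ℕ) (hfg : ∀ k, (f k).Perm (g k)) :
    ∀ m, (sufF f m).Perm (sufF g m) := by
  intro m
  induction m with
  | zero => exact List.Perm.refl _
  | succ m ih => exact List.Perm.append (hfg m) ih

end SkylineAux


namespace SkylineAux

variable {n : ℕ}

def Rcell (Y : SkylineFilling n) (i : Fin n) (k : ℕ) : Prop :=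
  Y.inner i < k ∧ k ≤ Y.shape i

theorem mem_colList {Y : SkylineFilling n} {k v : ℕ} :
    v ∈ Y.colList k ↔ ∃ i : Fin n, Rcell Y i k ∧ Y.entry i k = v := by
  unfold SkylineFilling.colList Rcell
  rw [List.mem_filterMap]
  constructor
  · rintro ⟨i, -, hi⟩
    by_cases h : Y.inner i < k ∧ k ≤ Y.shape i
    · rw [if_pos h] at hi
      exact ⟨i, h, Option.some_inj.mp hi⟩
    · rw [if_neg h] at hi
      exact absurd hi (by simp)
  · rintro ⟨i, h, hv⟩
    exact ⟨i, List.mem_finRange i, by rw [if_pos h, hv]⟩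

theorem col_ne (Y : SkylineFilling n) (hssk : Y.IsSSK) {i i' : Fin n} {k : ℕ} (hii : i < i')
    (hk : 1 ≤ k) (hi : k ≤ Y.shape i) (hi' : k ≤ Y.shape i') :
    Y.entry i k ≠ Y.entry i' k := by
  intro hEq
  rcases le_or_gt (Y.shape i') (Y.shape i) with hs | hs
  · have h := hssk.2.2.2.2.1 i i' k hii hs hk hi'
    unfold SkylineFilling.Inversion at h
    omega
  · have h := hssk.2.2.2.2.2 i i' k hii hs hi (by omega)
    unfold SkylineFilling.Inversion at h
    omega

theorem col_eq_row (Y : SkylineFilling n) (hssk : Y.IsSSK) {k : ℕ} (hk : 1 ≤ k)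
    {i i' : Fin n} (hi : k ≤ Y.shape i) (hi' : k ≤ Y.shape i')
    (hv : Y.entry i k = Y.entry i' k) : i = i' := by
  rcases lt_trichotomy i i' with h | h | h
  · exact absurd hv (col_ne Y hssk h hk hi hi')
  · exact h
  · exact absurd hv.symm (col_ne Y hssk h hk hi' hi)

theorem nodup_colList (Y : SkylineFilling n) (hssk : Y.IsSSK) (k : ℕ) (hk : 1 ≤ k) :
    (Y.colList k).Nodup := by
  unfold SkylineFilling.colList
  refine List.Nodup.filterMap ?_ (List.nodup_finRange n)
  intro a a' b hb hb'
  by_cases h : Y.inner a < k ∧ k ≤ Y.shape a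
  · rw [if_pos h] at hb
    by_cases h' : Y.inner a' < k ∧ k ≤ Y.shape a'
    · rw [if_pos h'] at hb'
      have e1 : Y.entry a k = b := Option.mem_some_iff.mp hb
      have e2 : Y.entry a' k = b := Option.mem_some_iff.mp hb'
      exact col_eq_row Y hssk hk h.2 h'.2 (by rw [e1, e2])
    · rw [if_neg h'] at hb'
      exact absurd hb' (by simp)
  · rw [if_neg h] at hb
    exact absurd hb (by simp)

theorem count_colList_le_one (Y : SkylineFilling n) (hssk : Y.IsSSK) (k v : ℕ) (hk : 1 ≤ k) :
    (Y.colList k).count v ≤ 1 :=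
  List.nodup_iff_count_le_one.mp (nodup_colList Y hssk k hk) v

theorem count_colList_eq_one (Y : SkylineFilling n) (hssk : Y.IsSSK) {k v : ℕ} (hk : 1 ≤ k)
    (hv : v ∈ Y.colList k) : (Y.colList k).count v = 1 := by
  have h1 := count_colList_le_one Y hssk k v hk
  have h2 := List.count_pos_iff.mpr hv
  omega

theorem sw (Y : SkylineFilling n) (hssk : Y.IsSSK) {i s : Fin n} {k v : ℕ} (his : i < s)
    (hk1 : 1 ≤ k) (hik : k ≤ Y.shape i) (hsk : k + 1 ≤ Y.shape s)
    (hvi : Y.entry i k = v) (hvs : Y.entry s (k+1) = v) : False := by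
  rcases le_or_gt (Y.shape s) (Y.shape i) with h | h
  · have ht := hssk.2.2.2.2.1 i s (k+1) his h (by omega) hsk
    rw [Nat.add_sub_cancel, hvi, hvs] at ht
    unfold SkylineFilling.Inversion at ht
    omega
  · have ht := hssk.2.2.2.2.2 i s k his h hik hsk
    rw [hvi, hvs] at ht
    unfold SkylineFilling.Inversion at ht
    omega

theorem rcell_of_val (Y : SkylineFilling n) (hssk : Y.IsSSK)
    (hbig : ∀ i : Fin n, n < Y.basement i) {i : Fin n} {k v : ℕ}
    (hsh : k ≤ Y.shape i) (hv : Y.entry i k = v) (hvn : v ≤ n) : Rcell Y i k := by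
  refine ⟨?_, hsh⟩
  by_contra hcon
  have h2 := hssk.2.1 i k (by omega)
  have h3 := hbig i
  omega

def Scnt (Y : SkylineFilling n) (k v : ℕ) : ℕ :=
  (sufF (fun t => Y.colList (t+1)) k).count v

theorem Scnt_succ (Y : SkylineFilling n) (k v : ℕ) :
    Scnt Y (k+1) v = (Y.colList (k+1)).count v + Scnt Y k v := by
  simp [Scnt, sufF, List.count_append]

theorem keyA (Y : SkylineFilling n) (hssk : Y.IsSSK) (hE : Y.EntriesIn n)
    (hbig : ∀ i : Fin n, n < Y.basement i) {j : ℕ} (hj : 2 ≤ j)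
    (hbd : ∀ k' ≤ Y.width, Scnt Y Y.width (j-1) + Scnt Y k' j
      ≤ Scnt Y Y.width j + Scnt Y k' (j-1)) :
    ∀ k, ∀ i i' : Fin n, i < i' → Y.shape i' ≤ Y.shape i →
      Rcell Y i k → Rcell Y i' k → Y.entry i k = j - 1 → Y.entry i' k = j →
      Scnt Y Y.width (j-1) + Scnt Y k j = Scnt Y Y.width j + Scnt Y k (j-1) → False := by
  intro k
  induction k using Nat.strong_induction_on with
  | _ k IH =>
  intro i i' hii hsh hRi hRi' hvi hvi' heq
  have hk1 : 1 ≤ k := by have := hRi.1; omega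
  have hjn : j ≤ n := by have := (hE i' k hRi'.1 hRi'.2).2; omega
  have hki : k ≤ Y.shape i := le_trans hRi'.2 hsh
  have hW : k ≤ Y.width := le_trans hRi'.2 (Finset.le_sup (Finset.mem_univ i'))
  have htr := hssk.2.2.2.2.1 i i' k hii hsh hk1 hRi'.2
  rw [hvi, hvi'] at htr
  unfold SkylineFilling.Inversion at htr
  have hc : Y.entry i (k-1) = j - 1 := by omega
  have hk2 : 2 ≤ k := by
    rcases Nat.lt_or_ge k 2 with h | h
    · have h0 : k - 1 = 0 := by omega
      rw [h0, hssk.2.2.1 i] at hc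
      have := hbig i
      omega
    · exact h
  have hkeq : k - 1 + 1 = k := by omega
  have hRik1 : Rcell Y i (k-1) := by
    refine ⟨?_, by omega⟩
    by_contra hcon
    have h2 := hssk.2.1 i (k-1) (by omega)
    have h3 := hbig i
    omega
  have hcka : (Y.colList k).count (j-1) = 1 :=
    count_colList_eq_one Y hssk hk1 (mem_colList.mpr ⟨i, hRi, hvi⟩)
  have hckb : (Y.colList k).count j = 1 :=
    count_colList_eq_one Y hssk hk1 (mem_colList.mpr ⟨i', hRi', hvi'⟩)
  have hck1a : (Y.colList (k-1)).count (j-1) = 1 :=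
    count_colList_eq_one Y hssk (by omega) (mem_colList.mpr ⟨i, hRik1, hc⟩)
  have hSk : ∀ v, Scnt Y k v = (Y.colList k).count v + Scnt Y (k-1) v := by
    intro v
    conv_lhs => rw [← hkeq]
    rw [Scnt_succ, hkeq]
  have hk1eq : k - 2 + 1 = k - 1 := by omega
  have hSk1 : ∀ v, Scnt Y (k-1) v = (Y.colList (k-1)).count v + Scnt Y (k-2) v := by
    intro v
    conv_lhs => rw [← hk1eq]
    rw [Scnt_succ, hk1eq]
  have hSkj := hSk j
  have hSkj1 := hSk (j-1)
  have heq' : Scnt Y Y.width (j-1) + Scnt Y (k-1) j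
      = Scnt Y Y.width j + Scnt Y (k-1) (j-1) := by omega
  have hbd2 := hbd (k-2) (by omega)
  have hSk1j := hSk1 j
  have hSk1j1 := hSk1 (j-1)
  have hbk1 : 0 < (Y.colList (k-1)).count j := by omega
  obtain ⟨r, hRr, hvr⟩ := mem_colList.mp (List.count_pos_iff.mp hbk1)
  have hir : i' ≤ r := by
    by_contra hcon
    exact sw Y hssk (not_le.mp hcon) (by omega) hRr.2
      (by rw [hkeq]; exact hRi'.2) hvr (by rw [hkeq]; exact hvi')
  have hirlt : i < r := lt_of_lt_of_le hii hir
  rcases le_or_gt (Y.shape r) (Y.shape i) with hcase | hcase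
  · exact IH (k-1) (by omega) i r hirlt hcase hRik1 hRr hc hvr heq'
  · have ht2 := hssk.2.2.2.2.2 i r (k-1) hirlt hcase (by omega)
      (by rw [hkeq]; omega)
    rw [hc, hvr, hkeq] at ht2
    unfold SkylineFilling.Inversion at ht2
    have hrk : Y.entry r k = j := by omega
    have hreq : r = i' := col_eq_row Y hssk hk1 (by omega) hRi'.2
      (by rw [hrk, hvi'])
    rw [hreq] at hcase
    omega

theorem keyB (Y : SkylineFilling n) (hssk : Y.IsSSK) (hE : Y.EntriesIn n)
    (hbig : ∀ i : Fin n, n < Y.basement i) {j : ℕ} (hj : 2 ≤ j)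
    (hbd : ∀ k' ≤ Y.width, Scnt Y Y.width (j-1) + Scnt Y k' j
      ≤ Scnt Y Y.width j + Scnt Y k' (j-1)) :
    ∀ m k, ∀ i i' : Fin n, Y.width - k = m → i < i' → Y.shape i < Y.shape i' →
      Rcell Y i k → Rcell Y i' k → Y.entry i k = j - 1 → Y.entry i' k = j →
      Scnt Y Y.width (j-1) + Scnt Y k j = Scnt Y Y.width j + Scnt Y k (j-1) → False := by
  intro m
  induction m using Nat.strong_induction_on with
  | _ m IH =>
  intro k i i' hm hii hsh hRi hRi' hvi hvi' heq
  have hk1 : 1 ≤ k := by have := hRi.1; omega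
  have hjn : j ≤ n := by have := (hE i' k hRi'.1 hRi'.2).2; omega
  have hki1 : k + 1 ≤ Y.shape i' := by have := hRi.2; omega
  have ht := hssk.2.2.2.2.2 i i' k hii hsh hRi.2 hki1
  rw [hvi, hvi'] at ht
  unfold SkylineFilling.Inversion at ht
  have hb1 : Y.entry i' (k+1) = j := by omega
  have hRi'k1 : Rcell Y i' (k+1) := rcell_of_val Y hssk hbig hki1 hb1 hjn
  have hW : k + 1 ≤ Y.width := le_trans hki1 (Finset.le_sup (Finset.mem_univ i'))
  have hckb : (Y.colList (k+1)).count j = 1 :=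
    count_colList_eq_one Y hssk (by omega) (mem_colList.mpr ⟨i', hRi'k1, hb1⟩)
  have hbd1 := hbd (k+1) hW
  have hSj := Scnt_succ Y k j
  have hSj1 := Scnt_succ Y k (j-1)
  have hckale := count_colList_le_one Y hssk (k+1) (j-1) (by omega)
  have hcka : (Y.colList (k+1)).count (j-1) = 1 := by omega
  have heq' : Scnt Y Y.width (j-1) + Scnt Y (k+1) j
      = Scnt Y Y.width j + Scnt Y (k+1) (j-1) := by omega
  obtain ⟨s, hRs, hvs⟩ := mem_colList.mp (List.count_pos_iff.mp
    (show 0 < (Y.colList (k+1)).count (j-1) by omega))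
  have hsi : s ≤ i := by
    by_contra hcon
    exact sw Y hssk (not_le.mp hcon) hk1 hRi.2 hRs.2 hvi hvs
  have hsii' : s < i' := lt_of_le_of_lt hsi hii
  rcases le_or_gt (Y.shape i') (Y.shape s) with hcase | hcase
  · have ht2 := hssk.2.2.2.2.1 s i' (k+1) hsii' hcase (by omega) hki1
    rw [Nat.add_sub_cancel, hvs, hb1] at ht2
    unfold SkylineFilling.Inversion at ht2
    have hsk : Y.entry s k = j - 1 := by omega
    have hseq : s = i := col_eq_row Y hssk hk1 (by omega) hRi.2
      (by rw [hsk, hvi])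
    rw [hseq] at hcase
    omega
  · exact IH (Y.width - (k+1)) (by omega) (k+1) s i' rfl hsii' hcase hRs hRi'k1 hvs hb1 heq'

theorem keyStrict (Y : SkylineFilling n) (hssk : Y.IsSSK) (hE : Y.EntriesIn n)
    (hbig : ∀ i : Fin n, n < Y.basement i) {j : ℕ} (hj : 2 ≤ j)
    (hbd : ∀ k' ≤ Y.width, Scnt Y Y.width (j-1) + Scnt Y k' j
      ≤ Scnt Y Y.width j + Scnt Y k' (j-1))
    {k : ℕ} {i i' : Fin n} (hii : i < i')
    (hRi : Rcell Y i k) (hRi' : Rcell Y i' k)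
    (hvi : Y.entry i k = j - 1) (hvi' : Y.entry i' k = j) :
    Scnt Y Y.width (j-1) + Scnt Y k j + 1 ≤ Scnt Y Y.width j + Scnt Y k (j-1) := by
  have hW : k ≤ Y.width := le_trans hRi'.2 (Finset.le_sup (Finset.mem_univ i'))
  have hb := hbd k hW
  by_contra hcon
  have heq : Scnt Y Y.width (j-1) + Scnt Y k j = Scnt Y Y.width j + Scnt Y k (j-1) := by omega
  rcases le_or_gt (Y.shape i') (Y.shape i) with hc | hc
  · exact keyA Y hssk hE hbig hj hbd k i i' hii hc hRi hRi' hvi hvi' heq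
  · exact keyB Y hssk hE hbig hj hbd (Y.width - k) k i i' rfl hii hc hRi hRi' hvi hvi' heq

end SkylineAux


namespace SkylineAux

variable {n : ℕ}

def fcol (Y : SkylineFilling n) : ℕ → List ℕ := fun k => Y.colList (k+1)

def floose (Y : SkylineFilling n) : ℕ → List ℕ :=
  fun k => List.insertionSort (· ≥ ·) (Y.colList (k+1))

def Gcol (Y : SkylineFilling n) : List (List ℕ) :=
  (List.range Y.width).reverse.map (fcol Y)

def Gloose (Y : SkylineFilling n) : List (List ℕ) :=
  (List.range Y.width).reverse.map (floose Y)

theorem colWord_eq (Y : SkylineFilling n) : Y.colWord = (Gcol Y).flatten := rfl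

theorem looseWord_eq (Y : SkylineFilling n) : Y.looseWord = (Gloose Y).flatten := rfl

theorem scnt_floose (Y : SkylineFilling n) (m v : ℕ) :
    (sufF (floose Y) m).count v = Scnt Y m v :=
  (sufF_perm (floose Y) (fcol Y) (fun k => List.perm_insertionSort _ _) m).count_eq v

theorem words_perm (Y : SkylineFilling n) : Y.looseWord.Perm Y.colWord := by
  rw [colWord_eq, looseWord_eq]
  unfold Gcol Gloose
  rw [flatten_map_rev, flatten_map_rev]
  exact sufF_perm _ _ (fun k => List.perm_insertionSort _ _) _

theorem max_eq (Y : SkylineFilling n) : maxLetter Y.looseWord = maxLetter Y.colWord :=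
  maxLetter_perm (words_perm Y)

theorem colWord_count (Y : SkylineFilling n) (v : ℕ) :
    Y.colWord.count v = Scnt Y Y.width v := by
  rw [colWord_eq]
  unfold Gcol
  rw [flatten_map_rev]
  rfl

theorem looseWord_count (Y : SkylineFilling n) (v : ℕ) :
    Y.looseWord.count v = Scnt Y Y.width v := by
  rw [looseWord_eq]
  unfold Gloose
  rw [flatten_map_rev]
  exact scnt_floose Y _ v

theorem bcount_col (Y : SkylineFilling n) (t v : ℕ) :
    (((Gcol Y).take t).flatten).count v + Scnt Y (Y.width - t) v = Scnt Y Y.width v :=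
  count_take_flatten_add (fcol Y) Y.width t v

theorem bcount_loose (Y : SkylineFilling n) (t v : ℕ) :
    (((Gloose Y).take t).flatten).count v + Scnt Y (Y.width - t) v = Scnt Y Y.width v := by
  have h := count_take_flatten_add (floose Y) Y.width t v
  rwa [scnt_floose, scnt_floose] at h

theorem bprefix_col (Y : SkylineFilling n) (t : ℕ) :
    ((Gcol Y).take t).flatten <+: Y.colWord := by
  rw [colWord_eq]
  simpa using decomp_prefix (Gcol Y) t 0

theorem bprefix_loose (Y : SkylineFilling n) (t : ℕ) :
    ((Gloose Y).take t).flatten <+: Y.looseWord := by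
  rw [looseWord_eq]
  simpa using decomp_prefix (Gloose Y) t 0

theorem head_col (Y : SkylineFilling n) {t : ℕ} (h : t < Y.width) :
    ((Gcol Y).drop t).headI = Y.colList (Y.width - t) := by
  unfold Gcol
  rw [headI_drop _ _ _ h]
  unfold fcol
  rw [show Y.width - t - 1 + 1 = Y.width - t from by omega]

theorem head_loose (Y : SkylineFilling n) {t : ℕ} (h : t < Y.width) :
    ((Gloose Y).drop t).headI = List.insertionSort (· ≥ ·) (Y.colList (Y.width - t)) := by
  unfold Gloose
  rw [headI_drop _ _ _ h]
  unfold floose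
  rw [show Y.width - t - 1 + 1 = Y.width - t from by omega]

theorem bprefix_col' (Y : SkylineFilling n) {t : ℕ} (h : t < Y.width) :
    (((Gcol Y).take t).flatten ++ Y.colList (Y.width - t)) <+: Y.colWord := by
  rw [colWord_eq]
  have h0 := decomp_prefix (Gcol Y) t ((Y.colList (Y.width - t)).length)
  rwa [head_col Y h, List.take_length] at h0

theorem contre_count_prefix {w P : List ℕ} (h : ContreUpTo (maxLetter w) w) (hP : P <+: w)
    {j : ℕ} (h1 : 1 < j) (h2 : j ≤ maxLetter w) : P.count (j-1) ≤ P.count j := by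
  have h3 := h P.length j h1 h2
  rwa [← List.prefix_iff_eq_take.mp hP] at h3

theorem dir_easy (Y : SkylineFilling n) (hcol : IsContreLattice Y.colWord) :
    IsContreLattice Y.looseWord := by
  intro i j hj1 hjr
  rw [max_eq] at hjr
  obtain ⟨t, s, hdec⟩ := take_flatten_decomp (Gloose Y) i
  have hre : Y.looseWord.take i
      = ((Gloose Y).take t).flatten ++ ((Gloose Y).drop t).headI.take s := by
    rw [looseWord_eq]; exact hdec
  rw [hre, List.count_append, List.count_append]
  have hb1a := bcount_loose Y t (j-1)
  have hb1b := bcount_loose Y t j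
  have hb2a := bcount_col Y t (j-1)
  have hb2b := bcount_col Y t j
  rcases Nat.lt_or_ge t Y.width with htW | htW
  · rw [head_loose Y htW]
    have hbdt := contre_count_prefix hcol (bprefix_col Y t) hj1 hjr
    have hbdt1 := contre_count_prefix hcol (bprefix_col' Y htW) hj1 hjr
    rw [List.count_append, List.count_append] at hbdt1
    have hsorted : List.Pairwise (· ≥ ·)
        (List.insertionSort (· ≥ ·) (Y.colList (Y.width - t))) :=
      List.pairwise_insertionSort _ _
    have hdperm : (List.insertionSort (· ≥ ·) (Y.colList (Y.width - t))).Perm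
        (Y.colList (Y.width - t)) := List.perm_insertionSort _ _
    have hdca := hdperm.count_eq (j-1)
    have hdcb := hdperm.count_eq j
    have htca := (List.take_sublist s
      (List.insertionSort (· ≥ ·) (Y.colList (Y.width - t)))).count_le (j-1)
    have htcb := (List.take_sublist s
      (List.insertionSort (· ≥ ·) (Y.colList (Y.width - t)))).count_le j
    rcases eq_or_lt_of_le htcb with hcb | hcb
    · omega
    · have hsplit : (List.insertionSort (· ≥ ·) (Y.colList (Y.width - t))).count j
          = ((List.insertionSort (· ≥ ·) (Y.colList (Y.width - t))).take s).count j
            + ((List.insertionSort (· ≥ ·) (Y.colList (Y.width - t))).drop s).count j := by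
        conv_lhs => rw [← List.take_append_drop s
          (List.insertionSort (· ≥ ·) (Y.colList (Y.width - t)))]
        rw [List.count_append]
      have hjd : j ∈ (List.insertionSort (· ≥ ·) (Y.colList (Y.width - t))).drop s :=
        List.count_pos_iff.mp (by omega)
      have htcz : ((List.insertionSort (· ≥ ·) (Y.colList (Y.width - t))).take s).count (j-1)
          = 0 := by
        by_contra hz
        have hmem : (j-1) ∈ (List.insertionSort (· ≥ ·) (Y.colList (Y.width - t))).take s :=
          List.count_pos_iff.mp (by omega)
        have hpw : List.Pairwise (· ≥ ·)
            ((List.insertionSort (· ≥ ·) (Y.colList (Y.width - t))).take s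
              ++ (List.insertionSort (· ≥ ·) (Y.colList (Y.width - t))).drop s) := by
          rw [List.take_append_drop]; exact hsorted
        have := (List.pairwise_append.mp hpw).2.2 _ hmem _ hjd
        omega
      omega
  · have hhead : ((Gloose Y).drop t).headI = [] := headI_drop_ge _ _ _ htW
    rw [hhead]
    simp only [List.take_nil, List.count_nil]
    have hWt : Y.width - t = 0 := by omega
    rw [hWt] at hb1a hb1b
    have hz1 : Scnt Y 0 (j-1) = 0 := rfl
    have hz2 : Scnt Y 0 j = 0 := rfl
    have hbdW := contre_count_prefix hcol (List.prefix_refl _) hj1 hjr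
    rw [colWord_count, colWord_count] at hbdW
    omega

theorem dir_hard (Y : SkylineFilling n) (hssk : Y.IsSSK) (hE : Y.EntriesIn n)
    (hbig : ∀ i : Fin n, n < Y.basement i) (hloose : IsContreLattice Y.looseWord) :
    IsContreLattice Y.colWord := by
  intro i j hj1 hjr
  rw [← max_eq] at hjr
  obtain ⟨t, s, hdec⟩ := take_flatten_decomp (Gcol Y) i
  have hre : Y.colWord.take i
      = ((Gcol Y).take t).flatten ++ ((Gcol Y).drop t).headI.take s := by
    rw [colWord_eq]; exact hdec
  rw [hre, List.count_append, List.count_append]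
  have hbdS : ∀ k' ≤ Y.width, Scnt Y Y.width (j-1) + Scnt Y k' j
      ≤ Scnt Y Y.width j + Scnt Y k' (j-1) := by
    intro k' hk'
    have hpre := contre_count_prefix hloose (bprefix_loose Y (Y.width - k')) hj1 hjr
    have ha := bcount_loose Y (Y.width - k') (j-1)
    have hb := bcount_loose Y (Y.width - k') j
    rw [show Y.width - (Y.width - k') = k' from by omega] at ha hb
    omega
  have hb2a := bcount_col Y t (j-1)
  have hb2b := bcount_col Y t j
  rcases Nat.lt_or_ge t Y.width with htW | htW
  · rw [head_col Y htW]
    have hkpos : 1 ≤ Y.width - t := by omega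
    have hbdt : (((Gcol Y).take t).flatten).count (j-1)
        ≤ (((Gcol Y).take t).flatten).count j := by
      have h0 := hbdS (Y.width - t) (by omega)
      omega
    rcases le_or_gt (((Y.colList (Y.width - t)).take s).count (j-1))
      (((Y.colList (Y.width - t)).take s).count j) with hcc | hcc
    · omega
    · have h1a := (List.take_sublist s (Y.colList (Y.width - t))).count_le (j-1)
      have h1b := (List.take_sublist s (Y.colList (Y.width - t))).count_le j
      have hle1 := count_colList_le_one Y hssk (Y.width - t) (j-1) hkpos
      have hle2 := count_colList_le_one Y hssk (Y.width - t) j hkpos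
      have hmem1 : (j-1) ∈ (Y.colList (Y.width - t)).take s :=
        List.count_pos_iff.mp (by omega)
      by_cases hjc : j ∈ Y.colList (Y.width - t)
      · have hjdrop : j ∈ (Y.colList (Y.width - t)).drop s := by
          have hx : j ∈ (Y.colList (Y.width - t)).take s ++ (Y.colList (Y.width - t)).drop s := by
            rw [List.take_append_drop]; exact hjc
          rcases List.mem_append.mp hx with hx' | hx'
          · exact absurd (List.count_pos_iff.mpr hx') (by omega)
          · exact hx'
        have hcl : Y.colList (Y.width - t) = (List.finRange n).filterMap
            (fun i0 => if Y.inner i0 < (Y.width - t) ∧ (Y.width - t) ≤ Y.shape i0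
              then some (Y.entry i0 (Y.width - t)) else none) := rfl
        rw [hcl] at hmem1 hjdrop
        obtain ⟨p, q, l₁, l₂, hl, hq, hfp, hfq⟩ :=
          filterMap_split _ (List.finRange n) s _ _ hmem1 hjdrop
        have hpq : p < q := rel_of_split (List.pairwise_lt_finRange n) hl hq
        have hp : Rcell Y p (Y.width - t) ∧ Y.entry p (Y.width - t) = j - 1 := by
          by_cases h : Y.inner p < Y.width - t ∧ Y.width - t ≤ Y.shape p
          · rw [if_pos h] at hfp; exact ⟨h, Option.some_inj.mp hfp⟩
          · rw [if_neg h] at hfp; exact absurd hfp (by simp)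
        have hq' : Rcell Y q (Y.width - t) ∧ Y.entry q (Y.width - t) = j := by
          by_cases h : Y.inner q < Y.width - t ∧ Y.width - t ≤ Y.shape q
          · rw [if_pos h] at hfq; exact ⟨h, Option.some_inj.mp hfq⟩
          · rw [if_neg h] at hfq; exact absurd hfq (by simp)
        have hstrict := keyStrict Y hssk hE hbig (by omega : 2 ≤ j) hbdS hpq
          hp.1 hq'.1 hp.2 hq'.2
        omega
      · have hcnt0 : (Y.colList (Y.width - t)).count j = 0 := List.count_eq_zero.mpr hjc
        have hcnt1 : 0 < (Y.colList (Y.width - t)).count (j-1) :=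
          List.count_pos_iff.mpr (List.mem_of_mem_take hmem1)
        have hbdt1 := hbdS (Y.width - t - 1) (by omega)
        have hsucc : Y.width - t - 1 + 1 = Y.width - t := by omega
        have hSa : Scnt Y (Y.width - t) (j-1)
            = (Y.colList (Y.width - t)).count (j-1) + Scnt Y (Y.width - t - 1) (j-1) := by
          conv_lhs => rw [← hsucc]
          rw [Scnt_succ, hsucc]
        have hSb : Scnt Y (Y.width - t) j
            = (Y.colList (Y.width - t)).count j + Scnt Y (Y.width - t - 1) j := by
          conv_lhs => rw [← hsucc]
          rw [Scnt_succ, hsucc]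
        omega
  · have hhead : ((Gcol Y).drop t).headI = [] := headI_drop_ge _ _ _ htW
    rw [hhead]
    simp only [List.take_nil, List.count_nil]
    have hWt : Y.width - t = 0 := by omega
    rw [hWt] at hb2a hb2b
    have hz1 : Scnt Y 0 (j-1) = 0 := rfl
    have hz2 : Scnt Y 0 j = 0 := rfl
    have hbdW := contre_count_prefix hloose (List.prefix_refl _) hj1 hjr
    rw [looseWord_count, looseWord_count] at hbdW
    omega

end SkylineAux


theorem stmt3 (n : ℕ) (Y : SkylineFilling n) (hssk : Y.IsSSK) (hE : Y.EntriesIn n)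
    (hbig : ∀ i : Fin n, n < Y.basement i) :
    IsContreLattice Y.colWord ↔ IsContreLattice Y.looseWord :=
  ⟨fun h => SkylineAux.dir_easy Y h, fun h => SkylineAux.dir_hard Y hssk hE hbig h⟩
end

section
/- Every semistandard skyline filling is non-attacking: entries within each column are distinct, and two cells (i,k) and (j,k+1) in adjacent columns can only contain equal values when i ≥ j. -/
open scoped Classical

lemma col_ne_aux (n : ℕ) (F : SkylineFilling n) (hssk : F.IsSSK)
    (i j : Fin n) (k : ℕ) (hij : i < j) (hk1 : 1 ≤ k)
    (hki : k ≤ F.shape i) (hkj : k ≤ F.shape j) :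
    F.entry i k ≠ F.entry j k := by
  obtain ⟨hin, hbase, h0, hrow, hA, hB⟩ := hssk
  rcases le_or_gt (F.shape j) (F.shape i) with h | h
  · have hI := hA i j k hij h hk1 hkj
    rcases hI with ⟨h1, h2⟩ | ⟨h1, h2⟩ <;> omega
  · have hI := hB i j k hij h hki (by omega)
    rcases hI with ⟨h1, h2⟩ | ⟨h1, h2⟩ <;> omega

theorem stmt4 (n : ℕ) (F : SkylineFilling n) (hssk : F.IsSSK) :
    (∀ i j : Fin n, ∀ k : ℕ, i ≠ j →
        F.inner i < k → k ≤ F.shape i → F.inner j < k → k ≤ F.shape j →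
        F.entry i k ≠ F.entry j k) ∧
    (∀ i j : Fin n, ∀ k : ℕ,
        F.inner i < k → k ≤ F.shape i → F.inner j < k + 1 → k + 1 ≤ F.shape j →
        F.entry i k = F.entry j (k + 1) → j ≤ i) := by
  constructor
  · intro i j k hij hik hksi hjk hksj heq
    rcases lt_or_gt_of_ne hij with h | h
    · exact col_ne_aux n F hssk i j k h (by omega) hksi hksj heq
    · exact col_ne_aux n F hssk j i k h (by omega) hksj hksi heq.symm
  · intro i j k hik hksi hjk hksj heq
    by_contra hle
    have hij : i < j := by
      simp only [not_le] at hle; exact hle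
    obtain ⟨hin, hbase, h0, hrow, hA, hB⟩ := hssk
    rcases le_or_gt (F.shape j) (F.shape i) with h | h
    · have hI := hA i j (k + 1) hij h (by omega) hksj
      simp only [Nat.add_sub_cancel] at hI
      rcases hI with ⟨h1, h2⟩ | ⟨h1, h2⟩ <;> omega
    · have hr := hrow j k hksj
      have hI := hB i j k hij h hksi hksj
      rcases hI with ⟨h1, h2⟩ | ⟨h1, h2⟩ <;> omega
end

section
/- The map ρ that sorts the entries within each column of a semistandard skyline filling with basement b_i = i into decreasing order is a bijection from SSKI(n) (SSK with basement b_i = i and entries in [n]) onto the set CT(n) of contretableaux with entries in [n], and ρ preserves the set of entries in each column. -/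
open scoped Classical

/-!
Write `#{x ∈ D | v ≤ x}` for the number of entries `≥ v` of a column with entry set `D`. A column
of a contretableau decreases downwards, so its cell in row `i` is at least `v` iff
`i < #{x ∈ D | v ≤ x}`: it holds the `i`-th largest element of `D`, and a contretableau is
determined by its column sets. In an SSKI the type A and type B triples say exactly that each
column arises from the previous one by placing its entries, largest first, in the topmost free row
whose previous entry is at least as large; such a placement is unique, so an SSKI is determined by
its column sets too, and `ρ` is injective. Conversely, the columns of a contretableau satisfy the
Hall-type condition that makes this greedy placement succeed column after column, because the
counts `#{x ∈ D_k | v ≤ x}` decrease with `k`; the resulting SSKI has the same column sets, so `ρ`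
maps it back to the contretableau.
-/

open Finset

theorem Nat.eq_of_forall_one_le_le_iff {a b : ℕ} (h : ∀ k, 1 ≤ k → (k ≤ a ↔ k ≤ b)) : a = b := by
  apply le_antisymm
  · rcases Nat.eq_zero_or_pos a with ha | ha
    · omega
    · exact (h a ha).1 le_rfl
  · rcases Nat.eq_zero_or_pos b with hb | hb
    · omega
    · exact (h b hb).2 le_rfl

theorem Nat.lt_find_iff_of_monotone {p : ℕ → Prop} [DecidablePred p] (hp : Monotone p)
    (h : ∃ m, p m) (k : ℕ) : k < Nat.find h ↔ ¬ p k := by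
  rw [Nat.lt_find_iff]
  exact ⟨fun H => H k le_rfl, fun H m hm hpm => H (hp hm hpm)⟩

namespace Finset

theorem antitone_card_filter_le (D : Finset ℕ) : Antitone fun v => #{x ∈ D | v ≤ x} :=
  fun _ _ huw => card_le_card (monotone_filter_right D fun _ _ hx => huw.trans hx)

theorem card_filter_le_eq_succ_add (D : Finset ℕ) (v : ℕ) :
    #{x ∈ D | v ≤ x} = #{x ∈ D | v + 1 ≤ x} + if v ∈ D then 1 else 0 := by
  have hsplit : {x ∈ D | v ≤ x} = {x ∈ D | v + 1 ≤ x} ∪ {x ∈ D | x = v} := by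
    rw [← filter_or]
    exact filter_congr fun x _ => by omega
  rw [hsplit, card_union_of_disjoint (disjoint_filter.2 fun _ _ h => by omega), filter_eq']
  split_ifs <;> simp

/-- The `i`-th largest element of `D`, counting from `i = 0`; it is `0` when `#D ≤ i`. -/
noncomputable def nthLargest (D : Finset ℕ) (i : ℕ) : ℕ :=
  Nat.findGreatest (fun v => i < #{x ∈ D | v ≤ x}) (D.sup id)

variable {D D' : Finset ℕ} {i j v : ℕ}

theorem le_nthLargest_iff (hv : 1 ≤ v) : v ≤ D.nthLargest i ↔ i < #{x ∈ D | v ≤ x} := by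
  constructor
  · intro h
    refine lt_of_lt_of_le ?_ (antitone_card_filter_le D h)
    exact Nat.findGreatest_of_ne_zero (P := fun v => i < #{x ∈ D | v ≤ x}) (n := D.sup id) rfl
      (Nat.pos_iff_ne_zero.1 (hv.trans h))
  · intro h
    obtain ⟨x, hx⟩ := card_pos.1 (Nat.zero_lt_of_lt h)
    rw [mem_filter] at hx
    exact Nat.le_findGreatest (hx.2.trans (le_sup (f := id) hx.1)) h

theorem lt_card_filter_nthLargest_le (h : i < #D) : i < #{x ∈ D | D.nthLargest i ≤ x} := by
  rcases Nat.eq_zero_or_pos (D.nthLargest i) with h0 | h0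
  · simpa [h0] using h
  · exact (le_nthLargest_iff h0).1 le_rfl

theorem nthLargest_mem (h : i < #D) : D.nthLargest i ∈ D := by
  by_contra hD
  have := lt_card_filter_nthLargest_le h
  rw [card_filter_le_eq_succ_add, if_neg hD, add_zero, ← le_nthLargest_iff (by omega)] at this
  omega

theorem nthLargest_lt_nthLargest (hij : i < j) (hj : j < #D) :
    D.nthLargest j < D.nthLargest i := by
  have := lt_card_filter_nthLargest_le hj
  rw [card_filter_le_eq_succ_add] at this
  exact (le_nthLargest_iff (v := D.nthLargest j + 1) (by omega)).2 (by split_ifs at this <;> omega)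

theorem nthLargest_eq_zero (h : #D ≤ i) : D.nthLargest i = 0 :=
  Nat.findGreatest_eq_zero_iff.2 fun _ _ _ hlt =>
    absurd (hlt.trans_le (card_filter_le _ _)) (by omega)

theorem exists_nthLargest_eq (hv : v ∈ D) : ∃ i < #D, D.nthLargest i = v := by
  have hcard := card_filter_le_eq_succ_add D v
  rw [if_pos hv] at hcard
  refine ⟨#{x ∈ D | v + 1 ≤ x}, by have := card_filter_le D (v ≤ ·); omega,
    Nat.eq_of_forall_one_le_le_iff fun k hk => ?_⟩
  rw [le_nthLargest_iff hk]
  constructor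
  · intro hlt
    by_contra hvk
    exact hlt.not_ge (antitone_card_filter_le D (by omega))
  · intro hkv
    have : #{x ∈ D | v ≤ x} ≤ #{x ∈ D | k ≤ x} := antitone_card_filter_le D hkv
    omega

theorem nthLargest_le_nthLargest (h : ∀ v, 1 ≤ v → #{x ∈ D' | v ≤ x} ≤ #{x ∈ D | v ≤ x}) :
    D'.nthLargest i ≤ D.nthLargest i := by
  rcases Nat.eq_zero_or_pos (D'.nthLargest i) with h0 | h0
  · omega
  · exact (le_nthLargest_iff h0).2 (((le_nthLargest_iff h0).1 le_rfl).trans_le (h _ h0))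

end Finset

/-- `col` (with `0` for "no cell") can stand right of `prev` in a skyline filling, with entry set
`D`: rows weakly decrease, and `lt_of_le_prev` is what the type A and type B inversion triples say
about two adjacent columns. -/
structure IsNextColumn {n : ℕ} (D : Finset ℕ) (prev col : Fin n → ℕ) : Prop where
  mem_of_ne_zero : ∀ i, col i ≠ 0 → col i ∈ D
  le_prev : ∀ i, col i ≤ prev i
  exists_eq_of_mem : ∀ v ∈ D, ∃ i, col i = v
  lt_of_le_prev : ∀ i j, i < j → col j ≠ 0 → col j ≤ prev i → col j < col i

theorem card_filter_le_update_zero {n : ℕ} {s : Finset ℕ} {a v : ℕ} {prev : Fin n → ℕ}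
    {r : Fin n} (hmax : ∀ x ∈ s, x < a) (h : #{x ∈ insert a s | v ≤ x} ≤ #{i | v ≤ prev i}) :
    #{x ∈ s | v ≤ x} ≤ #{i | v ≤ Function.update prev r 0 i} := by
  by_cases hva : v ≤ a
  · have hs : #{x ∈ insert a s | v ≤ x} = #{x ∈ s | v ≤ x} + 1 := by
      rw [filter_insert, if_pos hva,
        card_insert_of_notMem fun h => (hmax a (mem_filter.1 h).1).false]
    have hrows : ({i | v ≤ prev i} : Finset (Fin n)) ⊆
        insert r ({i | v ≤ Function.update prev r 0 i} : Finset (Fin n)) := by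
      intro i hi
      rcases eq_or_ne i r with rfl | hir
      · exact mem_insert_self _ _
      · simpa [Function.update_of_ne hir, hir] using hi
    have := h.trans ((card_le_card hrows).trans (card_insert_le _ _))
    omega
  · rw [filter_false_of_mem fun x hx => by have := hmax x hx; omega, card_empty]
    exact Nat.zero_le _

namespace IsNextColumn

variable {n : ℕ} {D : Finset ℕ} {prev col col' : Fin n → ℕ}

theorem eq_of_apply_eq (h : IsNextColumn D prev col) {i j : Fin n} (hne : col i ≠ 0)
    (hij : col i = col j) : i = j := by
  by_contra h'
  rcases lt_or_gt_of_ne h' with hlt | hlt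
  · exact (h.lt_of_le_prev i j hlt (hij ▸ hne) (hij ▸ h.le_prev i)).ne hij.symm
  · exact (h.lt_of_le_prev j i hlt hne (hij ▸ h.le_prev j)).ne hij

theorem card_filter_le (h : IsNextColumn D prev col) {v : ℕ} (hv : 1 ≤ v) :
    #{i | v ≤ col i} = #{x ∈ D | v ≤ x} := by
  refine card_nbij col (fun i hi => ?_) (fun i hi j _ hij => h.eq_of_apply_eq ?_ hij)
    fun x hx => ?_
  · simp only [coe_filter, Set.mem_ofPred_eq, mem_univ, true_and] at hi ⊢
    exact ⟨h.mem_of_ne_zero i (by omega), hi⟩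
  · simp only [coe_filter, Set.mem_ofPred_eq, mem_univ, true_and] at hi
    omega
  · simp only [coe_filter, Set.mem_ofPred_eq] at hx
    obtain ⟨i, rfl⟩ := h.exists_eq_of_mem x hx.1
    exact ⟨i, by simpa using hx.2, rfl⟩

theorem eq_of_forall_gt_iff (hA : IsNextColumn D prev col) (hB : IsNextColumn D prev col')
    {v : ℕ} (hv : v ≠ 0) (hgt : ∀ w ∈ D, v < w → ∀ i, col i = w ↔ col' i = w) {i : Fin n}
    (hi : col i = v) : col' i = v := by
  obtain ⟨j, hj⟩ := hB.exists_eq_of_mem v (hi ▸ hA.mem_of_ne_zero i (hi ▸ hv))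
  rcases lt_trichotomy i j with hij | rfl | hij
  · have hlt := hB.lt_of_le_prev i j hij (by omega) (hj ▸ hi ▸ hA.le_prev i)
    have := (hgt _ (hB.mem_of_ne_zero i (by omega)) (by omega) i).2 rfl
    omega
  · exact hj
  · have hlt := hA.lt_of_le_prev j i hij (by omega) (hi ▸ hj ▸ hB.le_prev j)
    have := (hgt _ (hA.mem_of_ne_zero j (by omega)) (by omega) j).1 rfl
    omega

theorem unique (hA : IsNextColumn D prev col) (hB : IsNextColumn D prev col') : col = col' := by
  have key : ∀ v, v ∈ D → v ≠ 0 → ∀ i, col i = v ↔ col' i = v := by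
    refine Nat.strong_decreasing_induction ⟨D.sup id, fun m hm hmD => ?_⟩ fun v ih hvD hv i => ?_
    · exact absurd (le_sup (f := id) hmD) (by simpa using hm)
    · have hgt : ∀ w ∈ D, v < w → ∀ i, col i = w ↔ col' i = w :=
        fun w hw hvw => ih w hvw hw (by omega)
      exact ⟨hA.eq_of_forall_gt_iff hB hv hgt,
        hB.eq_of_forall_gt_iff hA hv fun w hw hvw j => (hgt w hw hvw j).symm⟩
  funext i
  by_cases h0 : col i = 0
  · by_contra hne
    have := (key _ (hB.mem_of_ne_zero i (by omega)) (by omega) i).2 rfl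
    omega
  · exact ((key _ (hA.mem_of_ne_zero i h0) h0 i).1 rfl).symm

theorem update_insert_max {s : Finset ℕ} {a : ℕ} {r : Fin n}
    (h : IsNextColumn s (Function.update prev r 0) col) (h0 : 0 ∉ s) (hmax : ∀ x ∈ s, x < a)
    (har : a ≤ prev r) (hr : ∀ i, a ≤ prev i → r ≤ i) :
    IsNextColumn (insert a s) prev (Function.update col r a) := by
  have hcolr : col r = 0 := by simpa using h.le_prev r
  constructor
  · intro i hi
    rcases eq_or_ne i r with rfl | hir
    · simp
    · rw [Function.update_of_ne hir] at hi ⊢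
      exact mem_insert_of_mem (h.mem_of_ne_zero i hi)
  · intro i
    rcases eq_or_ne i r with rfl | hir
    · simpa using har
    · simpa [Function.update_of_ne hir] using h.le_prev i
  · intro v hv
    rcases mem_insert.1 hv with rfl | hv
    · exact ⟨r, by simp⟩
    · obtain ⟨j, rfl⟩ := h.exists_eq_of_mem v hv
      have hjr : j ≠ r := by rintro rfl; exact h0 (hcolr ▸ hv)
      exact ⟨j, Function.update_of_ne hjr _ _⟩
  · intro i j hij hj hle
    rcases eq_or_ne j r with rfl | hjr
    · rw [Function.update_self] at hle
      exact absurd (hr i hle) (not_le.2 hij)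
    rw [Function.update_of_ne hjr] at hj hle ⊢
    have hja := hmax _ (h.mem_of_ne_zero j hj)
    rcases eq_or_ne i r with rfl | hir
    · simpa using hja
    · rw [Function.update_of_ne hir]
      exact h.lt_of_le_prev i j hij hj (by rwa [Function.update_of_ne hir])

theorem exists_of_card_filter_le (h0 : 0 ∉ D)
    (hcard : ∀ v, 1 ≤ v → #{x ∈ D | v ≤ x} ≤ #{i | v ≤ prev i}) :
    ∃ col, IsNextColumn D prev col := by
  induction D using Finset.induction_on_max generalizing prev with
  | empty => exact ⟨0, ⟨by simp, by simp, by simp, by simp⟩⟩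
  | insert a s hmax ih =>
    have ha : 1 ≤ a := Nat.one_le_iff_ne_zero.2 fun h => h0 (h ▸ mem_insert_self a s)
    have hrows : ({i | a ≤ prev i} : Finset (Fin n)).Nonempty :=
      card_pos.1 ((card_pos.2 ⟨a, by simp⟩).trans_le (hcard a ha))
    -- the largest entry `a` goes to the topmost row that can take it
    set r := ({i | a ≤ prev i} : Finset (Fin n)).min' hrows
    have h0s : 0 ∉ s := fun h => h0 (mem_insert_of_mem h)
    obtain ⟨col, hcol⟩ :=
      ih h0s fun v hv => card_filter_le_update_zero (r := r) hmax (hcard v hv)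
    exact ⟨_, hcol.update_insert_max h0s hmax (by simpa using min'_mem _ hrows)
      fun i hi => min'_le _ _ (by simpa using hi)⟩

/-- Recovers the type B triples: induction backwards from the column `m + 1` where row `i`, but
not row `j`, has ended. -/
theorem lt_succ_of_chain {D : ℕ → Finset ℕ} {c : ℕ → Fin n → ℕ}
    (hc : ∀ k, IsNextColumn (D (k + 1)) (c k) (c (k + 1))) {i j : Fin n} (hij : i < j) {k m : ℕ}
    (hkm : k ≤ m) (hi : c (m + 1) i = 0) (hj : c (m + 1) j ≠ 0) : c k i < c (k + 1) j := by
  refine Nat.decreasingInduction (motive := fun k _ => c k i < c (k + 1) j)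
    (fun k _ ih => ?_) ?_ hkm
  · have := (hc (k + 1)).le_prev j
    by_contra hle
    have := (hc k).lt_of_le_prev i j hij (by omega) (not_lt.1 hle)
    omega
  · by_contra hle
    have := (hc m).lt_of_le_prev i j hij hj (not_lt.1 hle)
    omega

end IsNextColumn

/-- The column following `prev` with entry set `D` (unique by `IsNextColumn.unique`), or `0` if
there is none. -/
noncomputable def nextColumn {n : ℕ} (D : Finset ℕ) (prev : Fin n → ℕ) : Fin n → ℕ :=
  if h : ∃ col, IsNextColumn D prev col then h.choose else 0

theorem isNextColumn_nextColumn {n : ℕ} {D : Finset ℕ} {prev : Fin n → ℕ} (h0 : 0 ∉ D)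
    (hcard : ∀ v, 1 ≤ v → #{x ∈ D | v ≤ x} ≤ #{i | v ≤ prev i}) :
    IsNextColumn D prev (nextColumn D prev) := by
  have h := IsNextColumn.exists_of_card_filter_le h0 hcard
  rw [nextColumn, dif_pos h]
  exact h.choose_spec

theorem nextColumn_empty {n : ℕ} (prev : Fin n → ℕ) : nextColumn ∅ prev = 0 := by
  funext i
  by_contra h
  exact notMem_empty _
    ((isNextColumn_nextColumn (notMem_empty 0) (by simp)).mem_of_ne_zero i h)

namespace Filling

variable {n : ℕ}

theorem mem_colList_iff {T : Filling n} {k v : ℕ} :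
    v ∈ T.colList k ↔ ∃ i, 1 ≤ k ∧ k ≤ T.shape i ∧ T.entry i k = v := by
  simp [colList, and_assoc]

theorem colList_toFinset_eq_empty (T : Filling n) {k : ℕ} (hk : univ.sup T.shape < k) :
    (T.colList k).toFinset = ∅ := by
  ext v
  simp only [List.mem_toFinset, mem_colList_iff, notMem_empty, iff_false, not_exists, not_and]
  intro i _ hki
  have : T.shape i ≤ univ.sup T.shape := le_sup (mem_univ i)
  omega

namespace IsCT

variable {m : ℕ} {T : Filling n} (hT : T.IsCT m) {i : Fin n} {k v : ℕ}
include hT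

theorem entry_ne_zero_iff : T.entry i k ≠ 0 ↔ 1 ≤ k ∧ k ≤ T.shape i := by
  obtain ⟨-, -, -, hrange, hzero⟩ := id hT
  refine ⟨fun h => ?_, fun h => ?_⟩
  · by_contra hk
    exact h (hzero i k (by omega))
  · have := (hrange i k h.1 h.2).1
    omega

theorem colList_subset_Icc (k : ℕ) : (T.colList k).toFinset ⊆ Icc 1 m := by
  intro v hv
  obtain ⟨i, hk, hki, rfl⟩ := mem_colList_iff.1 (List.mem_toFinset.1 hv)
  exact mem_Icc.2 (hT.2.2.2.1 i k hk hki)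

theorem antitone_entry (k : ℕ) : Antitone (T.entry · k) := by
  intro i j hij
  by_cases hj : T.entry j k = 0
  · simp only [hj]
    exact Nat.zero_le _
  obtain ⟨hk, hkj⟩ := hT.entry_ne_zero_iff.1 hj
  rcases hij.lt_or_eq with hij | rfl
  · exact (hT.2.2.1 i j k hij hk hkj).le
  · exact le_rfl

theorem card_filter_le_entry (hv : 1 ≤ v) :
    #{i | v ≤ T.entry i k} = #{x ∈ (T.colList k).toFinset | v ≤ x} := by
  have hne : ∀ {i}, v ≤ T.entry i k → 1 ≤ k ∧ k ≤ T.shape i := fun h =>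
    hT.entry_ne_zero_iff.1 (by omega)
  have hinj : ∀ {i j}, v ≤ T.entry j k → i < j → T.entry j k ≠ T.entry i k := fun hj hij =>
    (hT.2.2.1 _ _ k hij (hne hj).1 (hne hj).2).ne
  refine card_nbij (T.entry · k) (fun i hi => ?_) (fun i hi j hj hij => ?_) fun x hx => ?_
  · simp only [coe_filter, mem_univ, true_and, Set.mem_ofPred_eq] at hi ⊢
    exact ⟨List.mem_toFinset.2 (mem_colList_iff.2 ⟨i, (hne hi).1, (hne hi).2, rfl⟩), hi⟩
  · simp only [coe_filter, mem_univ, true_and, Set.mem_ofPred_eq] at hi hj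
    rcases lt_trichotomy i j with h | h | h
    · exact absurd hij.symm (hinj hj h)
    · exact h
    · exact absurd hij (hinj hi h)
  · simp only [coe_filter, Set.mem_ofPred_eq, List.mem_toFinset] at hx
    obtain ⟨i, -, -, rfl⟩ := mem_colList_iff.1 hx.1
    exact ⟨i, by simpa using hx.2, rfl⟩

theorem le_entry_iff (hv : 1 ≤ v) :
    v ≤ T.entry i k ↔ i < #{x ∈ (T.colList k).toFinset | v ≤ x} := by
  rw [← hT.card_filter_le_entry hv]
  exact (Tuple.lt_card_ge_iff_apply_ge_of_antitone (hT.antitone_entry k)).symm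

theorem entry_eq_nthLargest : T.entry i k = (T.colList k).toFinset.nthLargest i :=
  Nat.eq_of_forall_one_le_le_iff fun _ hv => by rw [hT.le_entry_iff hv, le_nthLargest_iff hv]

theorem le_shape_iff (hk : 1 ≤ k) : k ≤ T.shape i ↔ i < #(T.colList k).toFinset := by
  have hpos : #{x ∈ (T.colList k).toFinset | 1 ≤ x} = #(T.colList k).toFinset :=
    congrArg card (filter_true_of_mem fun x hx => (mem_Icc.1 (hT.colList_subset_Icc k hx)).1)
  rw [← hpos, ← hT.le_entry_iff le_rfl, Nat.one_le_iff_ne_zero, hT.entry_ne_zero_iff]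
  exact ⟨fun h => ⟨hk, h⟩, And.right⟩

theorem card_filter_colList_succ_le (hk : 1 ≤ k) (hv : 1 ≤ v) :
    #{x ∈ (T.colList (k + 1)).toFinset | v ≤ x} ≤ #{x ∈ (T.colList k).toFinset | v ≤ x} := by
  rw [← hT.card_filter_le_entry hv, ← hT.card_filter_le_entry hv]
  refine card_le_card (monotone_filter_right _ fun i _ hi => hi.trans ?_)
  exact hT.2.1 i k hk ((hT.entry_ne_zero_iff.1 (by omega)).2)

theorem ext_of_colList {m' : ℕ} {T' : Filling n} (hT' : T'.IsCT m')
    (h : ∀ k, (T.colList k).toFinset = (T'.colList k).toFinset) : T = T' := by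
  have hshape : T.shape = T'.shape := funext fun i =>
    Nat.eq_of_forall_one_le_le_iff fun k hk => by rw [hT.le_shape_iff hk, hT'.le_shape_iff hk, h]
  have hentry : T.entry = T'.entry := funext fun i => funext fun k => by
    rw [hT.entry_eq_nthLargest, hT'.entry_eq_nthLargest, h]
  cases T
  cases T'
  simp only at hshape hentry
  rw [hshape, hentry]

end IsCT

end Filling

namespace SkylineFilling

variable {n : ℕ}

/-- `SSKI(n)`. Rows are `0`-indexed, so the basement `bᵢ = i` of row `i` reads `i + 1` here. -/
def IsSSKI (F : SkylineFilling n) : Prop :=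
  F.inner = (fun _ => 0) ∧ F.basement = (fun i : Fin n => (i : ℕ) + 1) ∧
    F.IsSSK ∧ F.EntriesIn n ∧ F.Normalized

theorem mem_colSet_iff {F : SkylineFilling n} {k v : ℕ} :
    v ∈ F.colSet k ↔ ∃ i, F.inner i < k ∧ k ≤ F.shape i ∧ F.entry i k = v := by
  simp [colSet, colList, and_assoc]

theorem colSet_zero (F : SkylineFilling n) : F.colSet 0 = ∅ := by
  ext v
  simp [mem_colSet_iff]

theorem colSet_eq_empty_of_width_lt (F : SkylineFilling n) {k : ℕ} (hk : F.width < k) :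
    F.colSet k = ∅ := by
  ext v
  simp only [mem_colSet_iff, notMem_empty, iff_false, not_exists, not_and]
  intro i _ hki
  have : F.shape i ≤ F.width := le_sup (mem_univ i)
  omega

theorem exists_card_colSet_le (F : SkylineFilling n) (i : Fin n) :
    ∃ m, #(F.colSet (m + 1)) ≤ i :=
  ⟨F.width, by simp [F.colSet_eq_empty_of_width_lt (Nat.lt_succ_self _)]⟩

/-- The map `ρ`. -/
noncomputable def sortColumns (F : SkylineFilling n) : Filling n where
  shape i := Nat.find (F.exists_card_colSet_le i)
  entry i k := (F.colSet k).nthLargest i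

namespace IsSSKI

variable {F : SkylineFilling n} (hF : F.IsSSKI) {i j : Fin n} {k v : ℕ}
include hF

theorem entry_zero (i : Fin n) : F.entry i 0 = i + 1 := by
  rw [hF.2.2.1.2.2.1, hF.2.1]

theorem entry_eq_zero (hk : F.shape i < k) : F.entry i k = 0 :=
  hF.2.2.2.2 i k hk

theorem entry_succ_le (i : Fin n) (k : ℕ) : F.entry i (k + 1) ≤ F.entry i k := by
  by_cases hk : k + 1 ≤ F.shape i
  · exact hF.2.2.1.2.2.2.1 i k hk
  · rw [hF.entry_eq_zero (by omega)]
    exact Nat.zero_le _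

theorem entry_mem_Icc (hk : 1 ≤ k) (hki : k ≤ F.shape i) : F.entry i k ∈ Icc 1 n :=
  mem_Icc.2 (hF.2.2.2.1 i k (by simp [hF.1]; omega) hki)

theorem entry_ne_zero_iff (hk : 1 ≤ k) : F.entry i k ≠ 0 ↔ k ≤ F.shape i := by
  refine ⟨fun h => ?_, fun h => ?_⟩
  · by_contra hki
    exact h (hF.entry_eq_zero (by omega))
  · have := mem_Icc.1 (hF.entry_mem_Icc hk h)
    omega

theorem mem_colSet_iff (hk : 1 ≤ k) :
    v ∈ F.colSet k ↔ ∃ i, k ≤ F.shape i ∧ F.entry i k = v := by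
  simp [SkylineFilling.mem_colSet_iff, hF.1, show 0 < k by omega]

theorem colSet_subset_Icc (k : ℕ) : F.colSet k ⊆ Icc 1 n := by
  intro v hv
  obtain ⟨i, hik, hki, rfl⟩ := SkylineFilling.mem_colSet_iff.1 hv
  exact hF.entry_mem_Icc (by simp [hF.1] at hik; omega) hki

/-- Induction from the basement, where `bᵢ < bⱼ` rules out the second alternative of the type B
triple. -/
theorem entry_lt_entry_succ (hij : i < j) (hsh : F.shape i < F.shape j) :
    ∀ k, k ≤ F.shape i → F.entry i k < F.entry j (k + 1) := by
  obtain ⟨-, -, ⟨-, -, -, -, -, htypeB⟩, -, -⟩ := id hF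
  intro k
  induction k with
  | zero =>
    intro _
    rcases htypeB i j 0 hij hsh (Nat.zero_le _) (by omega) with ⟨h, -⟩ | ⟨-, h⟩
    · exact h
    · rw [hF.entry_zero, hF.entry_zero] at h
      exact absurd h (by simp only [Fin.lt_def] at hij; omega)
  | succ k ih =>
    intro hk
    rcases htypeB i j (k + 1) hij hsh hk (by omega) with ⟨h, -⟩ | ⟨-, h⟩
    · exact h
    · have := ih (by omega)
      have := hF.entry_succ_le i k
      omega

theorem isNextColumn (k : ℕ) :
    IsNextColumn (F.colSet (k + 1)) (F.entry · k) (F.entry · (k + 1)) where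
  mem_of_ne_zero i hi := (hF.mem_colSet_iff (by omega)).2
    ⟨i, (hF.entry_ne_zero_iff (by omega)).1 hi, rfl⟩
  le_prev i := hF.entry_succ_le i k
  exists_eq_of_mem v hv := by
    obtain ⟨i, -, hi⟩ := (hF.mem_colSet_iff (by omega)).1 hv
    exact ⟨i, hi⟩
  lt_of_le_prev i j hij hj hle := by
    obtain ⟨-, -, ⟨-, -, -, -, htypeA, -⟩, -, -⟩ := id hF
    have hkj := (hF.entry_ne_zero_iff (by omega)).1 hj
    by_cases hsh : F.shape j ≤ F.shape i
    · rcases htypeA i j (k + 1) hij hsh (by omega) hkj with ⟨h, -⟩ | ⟨-, h⟩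
      · exact h
      · exact absurd hle (by simpa using h)
    · by_cases hki : k ≤ F.shape i
      · exact absurd hle (not_le.2 (hF.entry_lt_entry_succ hij (by omega) k hki))
      · rw [hF.entry_eq_zero (show F.shape i < k by omega)] at hle
        omega

theorem card_filter_colSet_succ_le (k : ℕ) (hv : 1 ≤ v) :
    #{x ∈ F.colSet (k + 2) | v ≤ x} ≤ #{x ∈ F.colSet (k + 1) | v ≤ x} := by
  rw [← (hF.isNextColumn _).card_filter_le hv, ← (hF.isNextColumn _).card_filter_le hv]
  exact card_le_card (monotone_filter_right _ fun i _ hi => hi.trans (hF.entry_succ_le i _))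

theorem card_colSet_succ_le (k : ℕ) : #(F.colSet (k + 2)) ≤ #(F.colSet (k + 1)) := by
  have hpos : ∀ k, #{x ∈ F.colSet k | 1 ≤ x} = #(F.colSet k) := fun k =>
    congrArg card (filter_true_of_mem fun x hx => (mem_Icc.1 (hF.colSet_subset_Icc k hx)).1)
  simpa only [hpos] using hF.card_filter_colSet_succ_le k le_rfl

theorem le_shape_sortColumns_iff (hk : 1 ≤ k) :
    k ≤ F.sortColumns.shape i ↔ i < #(F.colSet k) := by
  have hmono : Monotone fun m => #(F.colSet (m + 1)) ≤ i :=
    monotone_nat_of_le_succ fun m h => (hF.card_colSet_succ_le m).trans h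
  have := Nat.lt_find_iff_of_monotone hmono (F.exists_card_colSet_le i) (k - 1)
  rw [Nat.sub_add_cancel hk, not_le] at this
  change k ≤ Nat.find _ ↔ _
  rw [← this]
  omega

theorem isCT_sortColumns : F.sortColumns.IsCT n := by
  refine ⟨fun i j hij => Nat.find_mono fun m h => h.trans hij, fun i k hk _ => ?_,
    fun i j k hij hk hkj => ?_, fun i k hk hki => ?_, fun i k hk => ?_⟩
  · obtain ⟨k, rfl⟩ := Nat.exists_eq_add_of_le' hk
    exact nthLargest_le_nthLargest fun v hv => hF.card_filter_colSet_succ_le k hv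
  · exact nthLargest_lt_nthLargest hij ((hF.le_shape_sortColumns_iff hk).1 hkj)
  · exact mem_Icc.1 (hF.colSet_subset_Icc k
      (nthLargest_mem ((hF.le_shape_sortColumns_iff hk).1 hki)))
  · refine nthLargest_eq_zero ?_
    rcases hk with rfl | hk
    · simp [colSet_zero]
    · exact not_lt.1 fun h => (not_le.2 hk) ((hF.le_shape_sortColumns_iff (by omega)).2 h)

theorem colList_sortColumns (k : ℕ) : (F.sortColumns.colList k).toFinset = F.colSet k := by
  ext v
  simp only [List.mem_toFinset, Filling.mem_colList_iff]
  constructor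
  · rintro ⟨i, hk, hki, rfl⟩
    exact nthLargest_mem ((hF.le_shape_sortColumns_iff hk).1 hki)
  · intro hv
    obtain ⟨i, hi, rfl⟩ := exists_nthLargest_eq hv
    have hk : 1 ≤ k := Nat.one_le_iff_ne_zero.2 fun h => by simp [h, colSet_zero] at hv
    have hn : i < n := hi.trans_le (by simpa using card_le_card (hF.colSet_subset_Icc k))
    exact ⟨⟨i, hn⟩, hk, (hF.le_shape_sortColumns_iff hk).2 hi, rfl⟩

theorem ext_of_colSet {G : SkylineFilling n} (hG : G.IsSSKI) (h : ∀ k, F.colSet k = G.colSet k) :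
    F = G := by
  have hentry : ∀ k, (F.entry · k) = (G.entry · k) := by
    intro k
    induction k with
    | zero => funext i; rw [hF.entry_zero, hG.entry_zero]
    | succ k ih =>
      exact (hF.isNextColumn k).unique (by rw [h (k + 1), ih]; exact hG.isNextColumn k)
  have hshape : F.shape = G.shape := funext fun i => Nat.eq_of_forall_one_le_le_iff fun k hk => by
    rw [← hF.entry_ne_zero_iff hk, ← hG.entry_ne_zero_iff hk, congrFun (hentry k) i]
  obtain ⟨hFi, hFb, -⟩ := hF
  obtain ⟨hGi, hGb, -⟩ := hG
  cases F
  cases G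
  simp only at hFi hFb hGi hGb hshape hentry
  subst hFi hFb hGi hGb hshape
  congr
  funext i k
  exact congrFun (hentry k) i

end IsSSKI

end SkylineFilling

namespace Filling

variable {n : ℕ}

/-- The columns of `ρ⁻¹ T`, starting with the basement. -/
noncomputable def skylineColumn (T : Filling n) : ℕ → Fin n → ℕ
  | 0 => fun i => i + 1
  | k + 1 => nextColumn (T.colList (k + 1)).toFinset (T.skylineColumn k)

theorem exists_skylineColumn_eq_zero (T : Filling n) (i : Fin n) :
    ∃ m, T.skylineColumn (m + 1) i = 0 :=
  ⟨univ.sup T.shape, by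
    rw [skylineColumn, T.colList_toFinset_eq_empty (Nat.lt_succ_self _), nextColumn_empty]
    rfl⟩

noncomputable def toSkyline (T : Filling n) : SkylineFilling n where
  shape i := Nat.find (T.exists_skylineColumn_eq_zero i)
  inner _ := 0
  basement i := i + 1
  entry i k := T.skylineColumn k i

namespace IsCT

variable {T : Filling n} (hT : T.IsCT n) {i : Fin n} {k : ℕ}
include hT

theorem isNextColumn_skylineColumn (k : ℕ) :
    IsNextColumn (T.colList (k + 1)).toFinset (T.skylineColumn k) (T.skylineColumn (k + 1)) := by
  have h0 : ∀ k, 0 ∉ (T.colList k).toFinset := fun k h => by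
    simpa using hT.colList_subset_Icc k h
  induction k with
  | zero =>
    refine isNextColumn_nextColumn (h0 1) fun v hv => card_le_card_of_surjOn (· + 1) ?_
    intro x hx
    simp only [coe_filter, Set.mem_ofPred_eq] at hx
    have := mem_Icc.1 (hT.colList_subset_Icc 1 hx.1)
    refine ⟨⟨x - 1, by omega⟩, ?_, by simp; omega⟩
    rw [mem_coe, mem_filter]
    exact ⟨mem_univ _, by simp only [skylineColumn]; omega⟩
  | succ k ih =>
    refine isNextColumn_nextColumn (h0 (k + 2)) fun v hv => ?_
    rw [ih.card_filter_le hv]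
    exact hT.card_filter_colList_succ_le (by omega) hv

theorem skylineColumn_ne_zero_iff (hk : 1 ≤ k) :
    T.skylineColumn k i ≠ 0 ↔ k ≤ T.toSkyline.shape i := by
  have hmono : Monotone fun m => T.skylineColumn (m + 1) i = 0 :=
    monotone_nat_of_le_succ fun m h =>
      Nat.eq_zero_of_le_zero (h ▸ (hT.isNextColumn_skylineColumn (m + 1)).le_prev i)
  have := Nat.lt_find_iff_of_monotone hmono (T.exists_skylineColumn_eq_zero i) (k - 1)
  rw [Nat.sub_add_cancel hk] at this
  change ¬ _ = 0 ↔ k ≤ Nat.find _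
  rw [← this]
  omega

theorem isSSKI_toSkyline : T.toSkyline.IsSSKI := by
  have hnext := hT.isNextColumn_skylineColumn
  have hne : ∀ {i k}, 1 ≤ k → (T.skylineColumn k i ≠ 0 ↔ k ≤ T.toSkyline.shape i) :=
    hT.skylineColumn_ne_zero_iff
  refine ⟨rfl, rfl, ⟨fun _ => Nat.zero_le _, fun i k hk => ?_, fun _ => rfl,
    fun i k _ => (hnext k).le_prev i, fun i j k hij _ hk hkj => ?_,
    fun i j k hij hsh hki hkj => ?_⟩, fun i k hk hki => ?_, fun i k hk => ?_⟩
  · obtain rfl : k = 0 := Nat.le_zero.1 hk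
    rfl
  · obtain ⟨k, rfl⟩ := Nat.exists_eq_add_of_le' hk
    change SkylineFilling.Inversion (T.skylineColumn (k + 1) i) (T.skylineColumn (k + 1) j)
      (T.skylineColumn k i)
    by_cases hle : T.skylineColumn (k + 1) j ≤ T.skylineColumn k i
    · exact Or.inl ⟨(hnext k).lt_of_le_prev i j hij ((hne hk).2 hkj) hle, (hnext k).le_prev i⟩
    · exact Or.inr ⟨(hnext k).le_prev i, not_le.1 hle⟩
  · have hi : T.skylineColumn (T.toSkyline.shape i + 1) i = 0 :=
      not_not.1 fun h => by have := (hne (by omega)).1 h; omega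
    have hj : T.skylineColumn (T.toSkyline.shape i + 1) j ≠ 0 := (hne (by omega)).2 (by omega)
    exact Or.inl ⟨IsNextColumn.lt_succ_of_chain (D := fun k => (T.colList k).toFinset) hnext hij
      hki hi hj, (hnext k).le_prev j⟩
  · obtain ⟨k, rfl⟩ := Nat.exists_eq_add_of_le' (show 1 ≤ k from hk)
    exact mem_Icc.1 (hT.colList_subset_Icc _ ((hnext k).mem_of_ne_zero i ((hne hk).2 hki)))
  · exact not_not.1 fun h => by have := (hne (by omega)).1 h; omega

theorem colSet_toSkyline (k : ℕ) : T.toSkyline.colSet k = (T.colList k).toFinset := by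
  rcases Nat.eq_zero_or_pos k with rfl | hk
  · ext v
    simp [SkylineFilling.colSet_zero, mem_colList_iff]
  ext v
  rw [hT.isSSKI_toSkyline.mem_colSet_iff hk]
  obtain ⟨k, rfl⟩ := Nat.exists_eq_add_of_le' hk
  constructor
  · rintro ⟨i, hki, rfl⟩
    exact (hT.isNextColumn_skylineColumn k).mem_of_ne_zero i
      ((hT.skylineColumn_ne_zero_iff hk).2 hki)
  · intro hv
    obtain ⟨i, rfl⟩ := (hT.isNextColumn_skylineColumn k).exists_eq_of_mem v hv
    refine ⟨i, (hT.skylineColumn_ne_zero_iff hk).1 fun h => ?_, rfl⟩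
    simpa [h] using hT.colList_subset_Icc _ hv

end IsCT

end Filling

theorem stmt8 (n : ℕ) :
    ∃ ρ : {F : SkylineFilling n // F.inner = (fun _ => 0) ∧
        F.basement = (fun i : Fin n => (i : ℕ) + 1) ∧ F.IsSSK ∧ F.EntriesIn n ∧ F.Normalized} →
      {T : Filling n // T.IsCT n},
      Function.Bijective ρ ∧
        ∀ Y k, ((ρ Y).1.colList k).toFinset = Y.1.colSet k := by
  refine ⟨fun Y => ⟨Y.1.sortColumns, SkylineFilling.IsSSKI.isCT_sortColumns Y.2⟩,
    ⟨fun Y Y' hYY' => ?_, fun T => ?_⟩, fun Y k => SkylineFilling.IsSSKI.colList_sortColumns Y.2 k⟩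
  · refine Subtype.ext (SkylineFilling.IsSSKI.ext_of_colSet Y.2 Y'.2 fun k => ?_)
    rw [← SkylineFilling.IsSSKI.colList_sortColumns Y.2,
      ← SkylineFilling.IsSSKI.colList_sortColumns Y'.2]
    exact congrArg (fun T : {T : Filling n // T.IsCT n} => (T.1.colList k).toFinset) hYY'
  · have hY := T.2.isSSKI_toSkyline
    refine ⟨⟨T.1.toSkyline, hY⟩, Subtype.ext (hY.isCT_sortColumns.ext_of_colList T.2 fun k => ?_)⟩
    rw [hY.colList_sortColumns, T.2.colSet_toSkyline]
end

section
/- If L is a Littlewood–Richardson skew key of shape δ*/μ with entries in [n] whose basement shape μ is a partition, then its overall shape δ* must also be a partition; moreover all inversion triples of L are type A, the non-basement entries of L strictly decrease down columns, and L is a Littlewood–Richardson skew contretableau of shape δ*/μ. -/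
open scoped Classical

theorem stmt18 (n : ℕ) (F : SkylineFilling n)
    (hb : F.basement = fun i : Fin n => n + 1 + (i : ℕ))
    (hssk : F.IsSSK) (hE : F.EntriesIn n)
    (hreg : IsRegularContreLattice F.colWord)
    (hinner : ∀ i j : Fin n, i ≤ j → F.inner j ≤ F.inner i) :
    (∀ i j : Fin n, i ≤ j → F.shape j ≤ F.shape i) ∧
    (∀ i j : Fin n, ¬(i < j ∧ F.shape i < F.shape j)) ∧
    (∀ i j : Fin n, ∀ k : ℕ, i < j → F.inner i < k → F.inner j < k →
        k ≤ F.shape i → k ≤ F.shape j → F.entry j k < F.entry i k) ∧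
    ((∀ i : Fin n, ∀ k : ℕ, F.inner i < k → k + 1 ≤ F.shape i →
        F.entry i (k + 1) ≤ F.entry i k) ∧
      IsRegularContreLattice F.colWord) := by
  obtain ⟨hin, hbase, h0, hrow, hA, hB⟩ := hssk
  have hbv : ∀ i : Fin n, F.basement i = n + 1 + (i : ℕ) := by
    intro i; rw [hb]
  -- Part 2: no type B configurations
  have h2 : ∀ i j : Fin n, ¬(i < j ∧ F.shape i < F.shape j) := by
    rintro i j ⟨hij, hs⟩
    have hijv : (i : ℕ) < (j : ℕ) := hij
    have hμ : F.inner j ≤ F.inner i := hinner i j hij.le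
    have hμi : F.inner j ≤ F.shape i := le_trans hμ (hin i)
    have hμj : F.inner j < F.shape j := lt_of_le_of_lt hμi hs
    have htri := hB i j (F.inner j) hij hs hμi hμj
    have ha : F.entry j (F.inner j + 1) ≤ n :=
      (hE j _ (Nat.lt_succ_self _) hμj).2
    have hbj : F.entry j (F.inner j) = n + 1 + (j : ℕ) := by
      rw [hbase j _ le_rfl, hbv]
    have hbi : F.entry i (F.inner j) = n + 1 + (i : ℕ) := by
      rw [hbase i _ hμ, hbv]
    rw [hbi, hbj] at htri
    rcases htri with ⟨h1, _⟩ | ⟨_, h1⟩ <;> omega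
  -- Part 1: shape weakly decreasing
  have h1 : ∀ i j : Fin n, i ≤ j → F.shape j ≤ F.shape i := by
    intro i j hij
    rcases eq_or_lt_of_le hij with rfl | h
    · exact le_rfl
    · by_contra hlt
      exact h2 i j ⟨h, lt_of_not_ge hlt⟩
  -- Descent lemma: no column ascents among non-basement entries
  have key : ∀ t : ℕ, ∀ i j : Fin n, i < j → 1 ≤ t → t ≤ F.shape j → F.inner i < t →
      F.entry i t < F.entry j t → False := by
    intro t
    induction t with
    | zero => intro i j _ h; omega
    | succ t ih =>
      intro i j hij _ hsj hμi hlt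
      have hδ : F.shape j ≤ F.shape i := h1 i j hij.le
      have htri := hA i j (t + 1) hij hδ (Nat.le_add_left 1 t) hsj
      simp only [Nat.add_sub_cancel] at htri
      rcases htri with ⟨hba, _⟩ | ⟨_, hcb⟩
      · omega
      · have hμji : F.inner j < t + 1 := lt_of_le_of_lt (hinner i j hij.le) hμi
        have haj : F.entry j (t + 1) ≤ n := (hE j (t + 1) hμji hsj).2
        have hμit : F.inner i < t := by
          by_contra hcon
          push_neg at hcon
          rw [hbase i t hcon, hbv] at hcb
          omega
        have hrowj : F.entry j (t + 1) ≤ F.entry j t := hrow j t hsj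
        exact ih i j hij (by omega) (le_trans (Nat.le_succ t) hsj) hμit (by omega)
  -- Part 3: columns strictly decrease
  have h3 : ∀ i j : Fin n, ∀ k : ℕ, i < j → F.inner i < k → F.inner j < k →
      k ≤ F.shape i → k ≤ F.shape j → F.entry j k < F.entry i k := by
    intro i j k hij hμi hμj hsi hsj
    have hδ := h1 i j hij.le
    have hk1 : 1 ≤ k := by omega
    have htri := hA i j k hij hδ hk1 hsj
    rcases htri with ⟨hba, _⟩ | ⟨_, hcb⟩
    · exact hba
    · exfalso
      have hjk : F.entry j k ≤ n := (hE j k hμj hsj).2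
      have hμik : F.inner i < k - 1 := by
        by_contra hcon
        push_neg at hcon
        rw [hbase i (k - 1) hcon, hbv] at hcb
        omega
      have hrowj : F.entry j k ≤ F.entry j (k - 1) := by
        have h := hrow j (k - 1) (by omega)
        rwa [Nat.sub_add_cancel hk1] at h
      exact key (k - 1) i j hij (by omega) (by omega) hμik (by omega)
  exact ⟨h1, h2, h3, fun i k _ h => hrow i k h, hreg⟩
end
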